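/- arXiv:2311.09927 — 7 statements merged into one kernel-verified Lean document; each statement's English description precedes it below -/
import Mathlib

section
/- Let T ⊆ (0,∞) be nonempty and let γ₋ ∈ (0,1), γ₊ ∈ (1,∞) be such that T_{γ₋,γ₊} is dense in [γ₋,γ₊]. Then for every α₋ ∈ (0,1) and α₊ ∈ (1,∞) with α₊/α₋ > γ₊/γ₋, the set T_{α₋,α₊} is dense in [α₋,α₊]. -/
open Set Filter Topology Pointwise

noncomputable section

/-- `T* = T ∪ T⁻¹ ∪ {1}` -/
def Tstar (T : Set ℝ) : Set ℝ := T ∪ (fun t => t⁻¹) '' T ∪ {1}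

/-- `T_{γ₋,γ₊,n}`: products of `n` elements of `T*` whose partial products stay in `[γ₋,γ₊]`. -/
def TProdN (T : Set ℝ) (γm γp : ℝ) (n : ℕ) : Set ℝ :=
  {x | ∃ t : Fin n → ℝ, (∀ i, t i ∈ Tstar T) ∧ x = ∏ i, t i ∧
    ∀ k : Fin n, (∏ i ∈ Finset.univ.filter (· ≤ k), t i) ∈ Icc γm γp}

/-- `T_{γ₋,γ₊} = ⋃_{n ≥ 1} T_{γ₋,γ₊,n}` -/
def TProd (T : Set ℝ) (γm γp : ℝ) : Set ℝ := ⋃ n ∈ {n : ℕ | 1 ≤ n}, TProdN T γm γp n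

/-- `T_{γ₋,γ₊}` is dense in `[γ₋,γ₊]`. -/
def DenseInIcc (T : Set ℝ) (γm γp : ℝ) : Prop := Icc γm γp ⊆ closure (TProd T γm γp)

/-- The limit ratio `R_T ∈ [1,∞]` (with `inf ∅ = ∞`). -/
def limitRatio (T : Set ℝ) : ENNReal :=
  sInf {r : ENNReal | ∃ γm γp : ℝ, γm ∈ Ioo (0:ℝ) 1 ∧ 1 < γp ∧ DenseInIcc T γm γp ∧
    r = ENNReal.ofReal (γp / γm)}

/-- sup of a set of reals, valued in `[0,∞]`. -/
def eSup (I : Set ℝ) : ENNReal := ⨆ x ∈ I, ENNReal.ofReal x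

/-- inf of a set of reals, valued in `[0,∞]` (`= ∞` for `I = ∅`). -/
def eInf (I : Set ℝ) : ENNReal := ⨅ x ∈ I, ENNReal.ofReal x

namespace Stmt0Aux

variable {T : Set ℝ}

lemma inv_mem_Tstar {t : ℝ} (ht : t ∈ Tstar T) : t⁻¹ ∈ Tstar T := by
  rcases ht with (h | h) | h
  · exact Or.inl (Or.inr ⟨t, h, rfl⟩)
  · rcases h with ⟨s, hs, rfl⟩
    exact Or.inl (Or.inl (by simpa using hs))
  · right; simp only [mem_singleton_iff] at h ⊢; simp [h]

lemma Tstar_pos (hT0 : T ⊆ Ioi 0) {t : ℝ} (ht : t ∈ Tstar T) : 0 < t := by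
  rcases ht with (h | h) | h
  · exact hT0 h
  · rcases h with ⟨s, hs, rfl⟩; exact inv_pos.2 (hT0 hs)
  · simp only [mem_singleton_iff] at h; simp [h]

/-- partial products of `l` (nonempty prefixes) all lie in `[a,b]`. -/
def PartialsIn (l : List ℝ) (a b : ℝ) : Prop :=
  ∀ k, 1 ≤ k → k ≤ l.length → (l.take k).prod ∈ Icc a b

/-- admissible list -/
def Adm (T : Set ℝ) (a b : ℝ) (l : List ℝ) : Prop :=
  (∀ t ∈ l, t ∈ Tstar T) ∧ PartialsIn l a b

lemma take_ofFn_prod {n : ℕ} (t : Fin n → ℝ) :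
    ∀ m, m ≤ n → ((List.ofFn t).take m).prod
      = ∏ i ∈ Finset.univ.filter (fun i : Fin n => (i : ℕ) < m), t i := by
  intro m
  induction m with
  | zero => intro _; simp
  | succ m ih =>
    intro hm
    have hmn : m < n := hm
    have h1 : ((List.ofFn t).take (m+1)).prod
        = ((List.ofFn t).take m).prod * (List.ofFn t).get ⟨m, by simpa using hmn⟩ :=
      List.prod_take_succ _ m (by simpa using hmn)
    rw [h1, ih (le_of_lt hmn)]
    have hget : (List.ofFn t).get ⟨m, by simpa using hmn⟩ = t ⟨m, hmn⟩ := by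
      simp
    rw [hget]
    have hins : Finset.univ.filter (fun i : Fin n => (i : ℕ) < m + 1)
        = insert ⟨m, hmn⟩ (Finset.univ.filter (fun i : Fin n => (i : ℕ) < m)) := by
      ext i
      simp only [Finset.mem_filter, Finset.mem_univ, true_and, Finset.mem_insert]
      constructor
      · intro hi
        rcases Nat.lt_succ_iff_lt_or_eq.1 hi with h | h
        · exact Or.inr h
        · exact Or.inl (by ext; exact h)
      · rintro (rfl | hi)
        · exact Nat.lt_succ_self m
        · exact Nat.lt_succ_of_lt hi
    rw [hins, Finset.prod_insert (by simp)]
    ring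

lemma prod_filter_le_eq {n : ℕ} (t : Fin n → ℝ) (k : Fin n) :
    ∏ i ∈ Finset.univ.filter (· ≤ k), t i = ((List.ofFn t).take ((k : ℕ) + 1)).prod := by
  rw [take_ofFn_prod t ((k : ℕ) + 1) k.2]
  congr 1
  ext i
  simp only [Finset.mem_filter, Finset.mem_univ, true_and, Fin.le_def, Nat.lt_succ_iff]

lemma mem_TProd_of_adm {a b : ℝ} {l : List ℝ} (hne : l ≠ []) (hl : Adm T a b l) :
    l.prod ∈ TProd T a b := by
  have hlen : 1 ≤ l.length := Nat.one_le_iff_ne_zero.2 (fun h => hne (List.length_eq_zero_iff.1 h))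
  refine mem_biUnion (show l.length ∈ {n : ℕ | 1 ≤ n} from hlen) ?_
  refine ⟨l.get, fun i => hl.1 _ (List.get_mem l i), ?_, ?_⟩
  · rw [← List.prod_ofFn]
    rw [List.ofFn_get]
  · intro k
    rw [prod_filter_le_eq]
    rw [List.ofFn_get]
    exact hl.2 _ (Nat.succ_le_succ (Nat.zero_le _)) k.2

lemma exists_adm_of_mem_TProd {a b x : ℝ} (hx : x ∈ TProd T a b) :
    ∃ l : List ℝ, l ≠ [] ∧ Adm T a b l ∧ l.prod = x ∧ x ∈ Icc a b := by
  rcases mem_iUnion₂.1 hx with ⟨n, hn, t, ht, hx', hpart⟩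
  have hn1 : 1 ≤ n := hn
  refine ⟨List.ofFn t, ?_, ⟨?_, ?_⟩, ?_, ?_⟩
  · intro hnil
    have h0 := congrArg List.length hnil
    simp only [List.length_ofFn, List.length_nil] at h0
    omega
  · intro s hs
    rcases List.mem_ofFn.1 hs with ⟨i, rfl⟩
    exact ht i
  · intro k hk1 hk2
    simp only [List.length_ofFn] at hk2
    have hk : k - 1 < n := by omega
    have := hpart ⟨k - 1, hk⟩
    rw [prod_filter_le_eq] at this
    simpa [Nat.sub_add_cancel hk1] using this
  · rw [List.prod_ofFn, hx']
  · have := hpart ⟨n - 1, by omega⟩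
    rw [prod_filter_le_eq] at this
    have h2 : (n - 1 : ℕ) + 1 = n := by omega
    rw [h2] at this
    simpa [List.take_of_length_le (le_of_eq (List.length_ofFn (f := t))), List.prod_ofFn, ← hx'] using this

lemma partialsIn_append {α β C D : ℝ} {l₁ l₂ : List ℝ}
    (h₁ : PartialsIn l₁ α β) (h₂ : PartialsIn l₂ C D)
    (hsub : ∀ z ∈ Icc C D, l₁.prod * z ∈ Icc α β) :
    PartialsIn (l₁ ++ l₂) α β := by
  intro k hk1 hk2
  rw [List.take_append, List.prod_append]
  rcases le_or_gt k l₁.length with hk | hk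
  · have h0 : k - l₁.length = 0 := by omega
    rw [h0]
    simpa using h₁ k hk1 hk
  · have hl1 : l₁.take k = l₁ := List.take_of_length_le (by omega)
    rw [hl1]
    refine hsub _ (h₂ (k - l₁.length) (by omega) (by
      rw [List.length_append] at hk2; omega))

lemma take_reverse' {α : Type*} : ∀ (l : List α) (k : ℕ), k ≤ l.length →
    l.reverse.take k = (l.drop (l.length - k)).reverse := by
  intro l
  induction l with
  | nil => intro k hk; simp
  | cons a t ih =>
    intro k hk
    simp only [List.length_cons] at hk
    rcases eq_or_lt_of_le hk with h | h
    · subst h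
      simp [List.take_of_length_le]
    · have hk' : k ≤ t.length := by omega
      rw [List.reverse_cons, List.take_append_of_le_length (by simpa using hk'), ih k hk']
      simp only [List.length_cons]
      have h2 : t.length + 1 - k = (t.length - k) + 1 := by omega
      rw [h2, List.drop_succ_cons]

lemma prod_map_inv' : ∀ l : List ℝ, (l.map (·⁻¹)).prod = l.prod⁻¹ := by
  intro l
  induction l with
  | nil => simp
  | cons a t ih => simp [ih, mul_inv, mul_comm]

/-- partial products of the reversed-inverted list -/
lemma revinv_take_prod (l : List ℝ) (hpos : ∀ x ∈ l, 0 < x) (k : ℕ) (hk : k ≤ l.length) :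
    (((l.map (·⁻¹)).reverse).take k).prod = (l.take (l.length - k)).prod / l.prod := by
  have hlen : (l.map (·⁻¹)).length = l.length := List.length_map _
  rw [take_reverse' _ k (by rw [hlen]; exact hk), hlen, List.prod_reverse, ← List.map_drop,
    prod_map_inv']
  have hsplit : (l.take (l.length - k)).prod * (l.drop (l.length - k)).prod = l.prod :=
    List.prod_take_mul_prod_drop l _
  have htp : 0 < (l.take (l.length - k)).prod :=
    List.prod_pos (fun a ha => hpos a (List.mem_of_mem_take ha))
  have hdp : 0 < (l.drop (l.length - k)).prod :=
    List.prod_pos (fun a ha => hpos a (List.mem_of_mem_drop ha))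
  have hp : 0 < l.prod := by rw [← hsplit]; positivity
  rw [eq_div_iff hp.ne', ← hsplit]
  field_simp

/-- reachable positions -/
def Reach (T : Set ℝ) (am ap : ℝ) (C : ℝ) : Prop :=
  ∃ l : List ℝ, (∀ t ∈ l, t ∈ Tstar T) ∧ PartialsIn l am ap ∧ l.prod = C

lemma cont_pick {f : ℝ → ℝ → ℝ} {c' u₀ : ℝ}
    (hf : ContinuousAt (fun q : ℝ × ℝ => f q.1 q.2) (c', u₀))
    {U : Set ℝ} (hU : IsOpen U) (hmem : f c' u₀ ∈ U) :
    ∃ δ' > 0, ∀ P u : ℝ, |P - c'| < δ' → |u - u₀| < δ' → f P u ∈ U := by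
  have hpre : (fun q : ℝ × ℝ => f q.1 q.2) ⁻¹' U ∈ nhds (c', u₀) :=
    hf.preimage_mem_nhds (hU.mem_nhds hmem)
  rcases Metric.mem_nhds_iff.1 hpre with ⟨ε, hε, hball⟩
  refine ⟨ε, hε, fun P u hP hu => ?_⟩
  have : (P, u) ∈ (fun q : ℝ × ℝ => f q.1 q.2) ⁻¹' U := by
    apply hball
    rw [Metric.mem_ball, Prod.dist_eq]
    exact max_lt (by rwa [Real.dist_eq]) (by rwa [Real.dist_eq])
  exact this

section Main

variable {γm γp αm αp : ℝ}

/-- a forward block with value close to `y`. -/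
lemma block (hT0 : T ⊆ Ioi 0)
    (hd : Icc γm γp ⊆ closure (TProd T γm γp)) {y δ : ℝ}
    (hy : y ∈ Icc γm γp) (hδ : 0 < δ) :
    ∃ (l : List ℝ) (u : ℝ), l ≠ [] ∧ (∀ t ∈ l, t ∈ Tstar T) ∧
      PartialsIn l γm γp ∧ l.prod = u ∧ |u - y| < δ ∧ u ∈ Icc γm γp ∧ 0 < u := by
  rcases Metric.mem_closure_iff.1 (hd hy) δ hδ with ⟨z, hz, hdist⟩
  rcases exists_adm_of_mem_TProd hz with ⟨l, hne, ⟨helem, hpart⟩, hprod, hzIcc⟩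
  have hpos : 0 < z := hprod ▸ List.prod_pos (fun x hx => Tstar_pos hT0 (helem x hx))
  exact ⟨l, z, hne, helem, hpart, hprod,
    by rwa [Real.dist_eq, abs_sub_comm] at hdist, hzIcc, hpos⟩

/-- a reversed block: value `u⁻¹`, admissible in the sliding window `[γm/u, γp/u]`. -/
lemma revblock (hT0 : T ⊆ Ioi 0) (hγm1 : γm ≤ 1) (hγp1 : 1 ≤ γp)
    (hd : Icc γm γp ⊆ closure (TProd T γm γp)) {y δ : ℝ}
    (hy : y ∈ Icc γm γp) (hδ : 0 < δ) :
    ∃ (l : List ℝ) (u : ℝ), l ≠ [] ∧ (∀ t ∈ l, t ∈ Tstar T) ∧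
      PartialsIn l (γm / u) (γp / u) ∧ l.prod = u⁻¹ ∧ |u - y| < δ ∧ u ∈ Icc γm γp ∧ 0 < u := by
  obtain ⟨l₀, u, hne, helem, hpart, hprod, hdist, huIcc, hu⟩ := block hT0 hd hy hδ
  have hpos0 : ∀ x ∈ l₀, 0 < x := fun x hx => Tstar_pos hT0 (helem x hx)
  refine ⟨(l₀.map (·⁻¹)).reverse, u, ?_, ?_, ?_, ?_, hdist, huIcc, hu⟩
  · simp [hne]
  · intro s hs
    rw [List.mem_reverse] at hs
    rcases List.mem_map.1 hs with ⟨x, hx, rfl⟩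
    exact inv_mem_Tstar (helem x hx)
  · intro k hk1 hk2
    have hlen : ((l₀.map (·⁻¹)).reverse).length = l₀.length := by simp
    rw [hlen] at hk2
    rw [revinv_take_prod l₀ hpos0 k hk2, hprod]
    have htp : (l₀.take (l₀.length - k)).prod ∈ Icc γm γp := by
      rcases Nat.eq_zero_or_pos (l₀.length - k) with h0 | h0
      · rw [h0]
        simp only [List.take_zero, List.prod_nil]
        exact ⟨hγm1, hγp1⟩
      · exact hpart _ h0 (Nat.sub_le _ _)
    exact ⟨(div_le_div_iff_of_pos_right hu).2 htp.1, (div_le_div_iff_of_pos_right hu).2 htp.2⟩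
  · rw [List.prod_reverse, prod_map_inv', hprod]

variable (hT0 : T ⊆ Ioi 0)
  (hγm0 : 0 < γm) (hγm1 : γm < 1) (hγp1 : 1 < γp)
  (hαm0 : 0 < αm) (hαm1 : αm < 1) (hαp1 : 1 < αp)
  (hd : Icc γm γp ⊆ closure (TProd T γm γp))

include hT0 hγm0 hγm1 hγp1 hd in
/-- extension step: from approximate reachability of `c'`, reach `c'/u₀` provided the
latter lies in the safe open window. -/
lemma extend {c' u₀ : ℝ}
    (hE : ∀ δ > 0, ∃ P, Reach T αm αp P ∧ |P - c'| < δ)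
    (hu₀ : u₀ ∈ Icc γm γp) (hc : c' / u₀ ∈ Ioo (αm / γm) (αp / γp)) :
    ∀ δ > 0, ∃ P', Reach T αm αp P' ∧ P' ∈ Ioo (αm / γm) (αp / γp) ∧ |P' - c' / u₀| < δ := by
  intro δ hδ
  have hγp0 : 0 < γp := lt_trans one_pos hγp1
  have hu₀0 : 0 < u₀ := lt_of_lt_of_le hγm0 hu₀.1
  have hUopen : IsOpen (Ioo (αm / γm) (αp / γp) ∩ Metric.ball (c' / u₀) δ) :=
    isOpen_Ioo.inter Metric.isOpen_ball
  have hUmem : c' / u₀ ∈ Ioo (αm / γm) (αp / γp) ∩ Metric.ball (c' / u₀) δ :=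
    ⟨hc, Metric.mem_ball_self hδ⟩
  obtain ⟨δ', hδ'pos, hδ'⟩ := cont_pick (f := fun a b => a / b)
    (ContinuousAt.div continuousAt_fst continuousAt_snd hu₀0.ne') hUopen hUmem
  obtain ⟨P, ⟨lP, hlPelem, hlPpart, hlPprod⟩, hPc⟩ := hE δ' hδ'pos
  obtain ⟨lr, u, hlrne, hlrelem, hlrpart, hlrprod, huy, huIcc, hupos⟩ :=
    revblock hT0 hγm1.le hγp1.le hd hu₀ hδ'pos
  have hPpos : 0 < P := hlPprod ▸ List.prod_pos (fun x hx => Tstar_pos hT0 (hlPelem x hx))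
  have hQU := hδ' P u hPc huy
  refine ⟨P / u, ⟨lP ++ lr, ?_, ?_, ?_⟩, hQU.1, ?_⟩
  · intro t ht
    rcases List.mem_append.1 ht with h | h
    · exact hlPelem t h
    · exact hlrelem t h
  · refine partialsIn_append hlPpart hlrpart ?_
    intro z hz
    rw [hlPprod]
    have hQ1 : αm < (P / u) * γm := (div_lt_iff₀ hγm0).1 hQU.1.1
    have hQ2 : (P / u) * γp < αp := (lt_div_iff₀ hγp0).1 hQU.1.2
    have e1 : P * (γm / u) = (P / u) * γm := by ring
    have e2 : P * (γp / u) = (P / u) * γp := by ring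
    have hb1 : P * (γm / u) ≤ P * z := mul_le_mul_of_nonneg_left hz.1 hPpos.le
    have hb2 : P * z ≤ P * (γp / u) := mul_le_mul_of_nonneg_left hz.2 hPpos.le
    constructor <;> nlinarith
  · rw [List.prod_append, hlPprod, hlrprod, ← div_eq_mul_inv]
  · have := hQU.2
    rw [Metric.mem_ball, Real.dist_eq] at this
    exact this

include hT0 hγm0 hγm1 hγp1 hαm0 hαm1 hαp1 hd in
/-- the base point is approximately reachable. -/
lemma base (hh : αm / γm < αp / γp) :
    ∀ δ > 0, ∃ P, Reach T αm αp P ∧ P ∈ Ioo (αm / γm) (αp / γp) ∧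
      |P - (max (αm / γm) (1 / γp) + min (αp / γp) (1 / γm)) / 2| < δ := by
  have hγp0 : 0 < γp := lt_trans one_pos hγp1
  set C₀ := (max (αm / γm) (1 / γp) + min (αp / γp) (1 / γm)) / 2 with hC₀def
  have hmaxmin : max (αm / γm) (1 / γp) < min (αp / γp) (1 / γm) := by
    refine max_lt (lt_min hh ?_) (lt_min ?_ ?_)
    · rw [div_lt_div_iff₀ hγm0 hγm0]
      nlinarith
    · rw [div_lt_div_iff₀ hγp0 hγp0]
      nlinarith
    · rw [div_lt_div_iff₀ hγp0 hγm0]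
      nlinarith
  have hl : max (αm / γm) (1 / γp) < C₀ := by rw [hC₀def]; linarith
  have hr : C₀ < min (αp / γp) (1 / γm) := by rw [hC₀def]; linarith
  have hC₀Ioo : C₀ ∈ Ioo (αm / γm) (αp / γp) :=
    ⟨lt_of_le_of_lt (le_max_left _ _) hl, lt_of_lt_of_le hr (min_le_left _ _)⟩
  have hC₀pos : 0 < C₀ := lt_trans (div_pos hαm0 hγm0) hC₀Ioo.1
  have h1C₀ : (1 : ℝ) / C₀ ∈ Icc γm γp := by
    constructor
    · have h2 : C₀ < 1 / γm := lt_of_lt_of_le hr (min_le_right _ _)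
      rw [le_div_iff₀ hC₀pos]
      rw [lt_div_iff₀ hγm0] at h2
      nlinarith
    · have h2 : 1 / γp < C₀ := lt_of_le_of_lt (le_max_right _ _) hl
      rw [div_le_iff₀ hC₀pos]
      rw [div_lt_iff₀ hγp0] at h2
      nlinarith
  have hq : C₀ = 1 / (1 / C₀) := by
    rw [one_div_one_div]
  have hext := extend hT0 hγm0 hγm1 hγp1 hd (c' := 1) (u₀ := 1 / C₀)
    (fun δ hδ => ⟨1, ⟨[], by simp, fun k hk1 hk2 => by simp at hk2; omega, by simp⟩,
      by simpa using hδ⟩) h1C₀ (by rw [← hq]; exact hC₀Ioo)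
  intro δ hδ
  obtain ⟨P, hP1, hP2, hP3⟩ := hext δ hδ
  exact ⟨P, hP1, hP2, by rwa [← hq] at hP3⟩

include hT0 hγm0 hγm1 hγp1 hαm0 hαm1 hαp1 hd in
set_option maxHeartbeats 1000000 in
lemma walk (hh : αm / γm < αp / γp) :
    ∀ (n : ℕ) (c : ℝ), c ∈ Ioo (αm / γm) (αp / γp) →
      (max (αm / γm) (1 / γp) + min (αp / γp) (1 / γm)) / 2 * ((min γp (1 / γm)) ^ n)⁻¹ ≤ c →
      c ≤ (max (αm / γm) (1 / γp) + min (αp / γp) (1 / γm)) / 2 * (min γp (1 / γm)) ^ n →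
      ∀ δ > 0, ∃ P, Reach T αm αp P ∧ P ∈ Ioo (αm / γm) (αp / γp) ∧ |P - c| < δ := by
  have hγp0 : 0 < γp := lt_trans one_pos hγp1
  set C₀ := (max (αm / γm) (1 / γp) + min (αp / γp) (1 / γm)) / 2 with hC₀def
  set ρ := min γp (1 / γm) with hρdef
  have hρ1 : 1 < ρ := lt_min hγp1 ((one_lt_div hγm0).2 hγm1)
  have hρ0 : 0 < ρ := lt_trans one_pos hρ1
  have hmaxmin : max (αm / γm) (1 / γp) < min (αp / γp) (1 / γm) := by
    refine max_lt (lt_min hh ?_) (lt_min ?_ ?_)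
    · rw [div_lt_div_iff₀ hγm0 hγm0]; nlinarith
    · rw [div_lt_div_iff₀ hγp0 hγp0]; nlinarith
    · rw [div_lt_div_iff₀ hγp0 hγm0]; nlinarith
  have hl : max (αm / γm) (1 / γp) < C₀ := by rw [hC₀def]; linarith
  have hr : C₀ < min (αp / γp) (1 / γm) := by rw [hC₀def]; linarith
  have hC₀Ioo : C₀ ∈ Ioo (αm / γm) (αp / γp) :=
    ⟨lt_of_le_of_lt (le_max_left _ _) hl, lt_of_lt_of_le hr (min_le_left _ _)⟩
  have hC₀pos : 0 < C₀ := lt_trans (div_pos hαm0 hγm0) hC₀Ioo.1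
  intro n
  induction n with
  | zero =>
    intro c hc hlo hhi
    simp only [pow_zero, inv_one, mul_one] at hlo hhi
    have : c = C₀ := le_antisymm hhi hlo
    subst this
    exact base hT0 hγm0 hγm1 hγp1 hαm0 hαm1 hαp1 hd hh
  | succ n ih =>
    intro c hc hlo hhi
    have hρn0 : (0:ℝ) < ρ ^ n := pow_pos hρ0 n
    have hρn1 : (1:ℝ) ≤ ρ ^ n := one_le_pow₀ hρ1.le
    have hcpos : 0 < c := lt_trans (div_pos hαm0 hγm0) hc.1
    by_cases hup : c ≤ C₀ * ρ ^ n
    · by_cases hdn : C₀ * (ρ ^ n)⁻¹ ≤ c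
      · exact ih c hc hdn hup
      · push_neg at hdn
        -- c is low; climb to it from c' = min (c * ρ) C₀
        set c' := min (c * ρ) C₀ with hc'def
        have hcc' : c < c' := by
          refine lt_min ?_ ?_
          · nlinarith
          · calc c < C₀ * (ρ ^ n)⁻¹ := hdn
              _ ≤ C₀ := by
                rw [mul_inv_le_iff₀ hρn0]
                nlinarith
        have hc'Ioo : c' ∈ Ioo (αm / γm) (αp / γp) :=
          ⟨lt_trans hc.1 hcc', lt_of_le_of_lt (min_le_right _ _)
            (lt_of_lt_of_le hr (min_le_left _ _))⟩
        have hc'hi : c' ≤ C₀ * ρ ^ n := by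
          calc c' ≤ C₀ := min_le_right _ _
            _ ≤ C₀ * ρ ^ n := by nlinarith
        have hc'lo : C₀ * (ρ ^ n)⁻¹ ≤ c' := by
          refine le_min ?_ ?_
          · have h3 : C₀ * (ρ ^ (n+1))⁻¹ ≤ c := hlo
            rw [pow_succ] at h3
            have h4 : C₀ * (ρ ^ n * ρ)⁻¹ * ρ ≤ c * ρ := by nlinarith
            have e : C₀ * (ρ ^ n * ρ)⁻¹ * ρ = C₀ * (ρ ^ n)⁻¹ := by
              rw [mul_inv]
              field_simp
            linarith [e ▸ h4]
          · rw [mul_inv_le_iff₀ hρn0]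
            nlinarith
        have hD' := ih c' hc'Ioo hc'lo hc'hi
        have hc'pos : 0 < c' := lt_trans hcpos hcc'
        have hu₀ : c' / c ∈ Icc γm γp := by
          constructor
          · have : (1:ℝ) < c' / c := (one_lt_div hcpos).2 hcc'
            linarith
          · rw [div_le_iff₀ hcpos]
            have h4 : c' ≤ c * ρ := min_le_left _ _
            have h5 : ρ ≤ γp := min_le_left _ _
            nlinarith
        have hquot : c' / (c' / c) = c := by
          rw [div_div_eq_mul_div, mul_div_cancel_left₀ _ hc'pos.ne']
        have := extend hT0 hγm0 hγm1 hγp1 hd (c' := c') (u₀ := c' / c)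
          (fun δ hδ => ((hD' δ hδ).imp (fun P hP => ⟨hP.1, hP.2.2⟩))) hu₀
          (by rw [hquot]; exact hc)
        intro δ hδ
        obtain ⟨P, h1, h2, h3⟩ := this δ hδ
        exact ⟨P, h1, h2, by rwa [hquot] at h3⟩
    · push_neg at hup
      -- c is high; descend to it from c' = max (c / ρ) C₀
      set c' := max (c / ρ) C₀ with hc'def
      have hcc' : c' < c := by
        refine max_lt ?_ ?_
        · rw [div_lt_iff₀ hρ0]
          nlinarith
        · calc C₀ ≤ C₀ * ρ ^ n := by nlinarith
            _ < c := hup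
      have hc'Ioo : c' ∈ Ioo (αm / γm) (αp / γp) :=
        ⟨lt_of_lt_of_le (lt_of_le_of_lt (le_max_left _ _) hl) (le_max_right _ _),
          lt_trans hcc' hc.2⟩
      have hc'hi : c' ≤ C₀ * ρ ^ n := by
        refine max_le ?_ ?_
        · have h3 : c ≤ C₀ * ρ ^ (n+1) := hhi
          rw [pow_succ] at h3
          rw [div_le_iff₀ hρ0]
          nlinarith
        · nlinarith
      have hc'lo : C₀ * (ρ ^ n)⁻¹ ≤ c' := by
        have : C₀ * (ρ ^ n)⁻¹ ≤ C₀ := by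
          rw [mul_inv_le_iff₀ hρn0]
          nlinarith
        exact le_trans this (le_max_right _ _)
      have hD' := ih c' hc'Ioo hc'lo hc'hi
      have hc'pos : 0 < c' := lt_of_lt_of_le hC₀pos (le_max_right _ _)
      have hu₀ : c' / c ∈ Icc γm γp := by
        constructor
        · have h4 : c / ρ ≤ c' := le_max_left _ _
          have h5 : ρ ≤ 1 / γm := min_le_right _ _
          rw [le_div_iff₀ hcpos]
          rw [div_le_iff₀ hρ0] at h4
          rw [le_div_iff₀ hγm0] at h5
          nlinarith
        · have : c' / c < 1 := (div_lt_one hcpos).2 hcc'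
          linarith
      have hquot : c' / (c' / c) = c := by
        rw [div_div_eq_mul_div, mul_div_cancel_left₀ _ hc'pos.ne']
      have := extend hT0 hγm0 hγm1 hγp1 hd (c' := c') (u₀ := c' / c)
        (fun δ hδ => ((hD' δ hδ).imp (fun P hP => ⟨hP.1, hP.2.2⟩))) hu₀
        (by rw [hquot]; exact hc)
      intro δ hδ
      obtain ⟨P, h1, h2, h3⟩ := this δ hδ
      exact ⟨P, h1, h2, by rwa [hquot] at h3⟩

include hT0 hγm0 hγm1 hγp1 hαm0 hαm1 hαp1 hd in
/-- every point of the open safe window is approximately reachable. -/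
lemma reach_all (hh : αm / γm < αp / γp) {c : ℝ} (hc : c ∈ Ioo (αm / γm) (αp / γp)) :
    ∀ δ > 0, ∃ P, Reach T αm αp P ∧ P ∈ Ioo (αm / γm) (αp / γp) ∧ |P - c| < δ := by
  set C₀ := (max (αm / γm) (1 / γp) + min (αp / γp) (1 / γm)) / 2 with hC₀def
  set ρ := min γp (1 / γm) with hρdef
  have hρ1 : 1 < ρ := lt_min hγp1 ((one_lt_div hγm0).2 hγm1)
  have hρ0 : 0 < ρ := lt_trans one_pos hρ1
  have hγp0 : 0 < γp := lt_trans one_pos hγp1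
  have hcpos : 0 < c := lt_trans (div_pos hαm0 hγm0) hc.1
  have hmaxmin : max (αm / γm) (1 / γp) < min (αp / γp) (1 / γm) := by
    refine max_lt (lt_min hh ?_) (lt_min ?_ ?_)
    · rw [div_lt_div_iff₀ hγm0 hγm0]; nlinarith
    · rw [div_lt_div_iff₀ hγp0 hγp0]; nlinarith
    · rw [div_lt_div_iff₀ hγp0 hγm0]; nlinarith
  have hC₀pos : 0 < C₀ := by
    have h1 : 0 < αm / γm := div_pos hαm0 hγm0
    have h2 : αm / γm ≤ max (αm / γm) (1 / γp) := le_max_left _ _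
    rw [hC₀def]
    nlinarith
  obtain ⟨n, hn⟩ := pow_unbounded_of_one_lt (max (C₀ / c) (c / C₀)) hρ1
  have hρn0 : (0:ℝ) < ρ ^ n := pow_pos hρ0 n
  refine walk hT0 hγm0 hγm1 hγp1 hαm0 hαm1 hαp1 hd hh n c hc ?_ ?_
  · have h1 : C₀ / c < ρ ^ n := lt_of_le_of_lt (le_max_left _ _) hn
    rw [div_lt_iff₀ hcpos] at h1
    rw [mul_inv_le_iff₀ hρn0]
    nlinarith
  · have h1 : c / C₀ < ρ ^ n := lt_of_le_of_lt (le_max_right _ _) hn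
    rw [div_lt_iff₀ hC₀pos] at h1
    nlinarith

include hT0 hγm0 hγm1 hγp1 hαm0 hαm1 hαp1 hd in
lemma final (hh : αm / γm < αp / γp) {x : ℝ} (hx : x ∈ Ioo αm αp) :
    x ∈ closure (TProd T αm αp) := by
  have hγp0 : 0 < γp := lt_trans one_pos hγp1
  have hxpos : 0 < x := lt_trans hαm0 hx.1
  rw [Metric.mem_closure_iff]
  intro ε hε
  -- choose the hand-off point c
  set c := (max (αm / γm) (x / γp) + min (αp / γp) (x / γm)) / 2 with hcdef
  have hmaxmin : max (αm / γm) (x / γp) < min (αp / γp) (x / γm) := by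
    refine max_lt (lt_min hh ?_) (lt_min ?_ ?_)
    · rw [div_lt_div_iff₀ hγm0 hγm0]; nlinarith [hx.1]
    · rw [div_lt_div_iff₀ hγp0 hγp0]; nlinarith [hx.2]
    · rw [div_lt_div_iff₀ hγp0 hγm0]; nlinarith
  have hl : max (αm / γm) (x / γp) < c := by rw [hcdef]; linarith
  have hr : c < min (αp / γp) (x / γm) := by rw [hcdef]; linarith
  have hcIoo : c ∈ Ioo (αm / γm) (αp / γp) :=
    ⟨lt_of_le_of_lt (le_max_left _ _) hl, lt_of_lt_of_le hr (min_le_left _ _)⟩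
  have hcpos : 0 < c := lt_trans (div_pos hαm0 hγm0) hcIoo.1
  have hy₀ : x / c ∈ Icc γm γp := by
    constructor
    · have h2 : c < x / γm := lt_of_lt_of_le hr (min_le_right _ _)
      rw [le_div_iff₀ hcpos]
      rw [lt_div_iff₀ hγm0] at h2
      nlinarith
    · have h2 : x / γp < c := lt_of_le_of_lt (le_max_right _ _) hl
      rw [div_le_iff₀ hcpos]
      rw [div_lt_iff₀ hγp0] at h2
      nlinarith
  -- continuity of multiplication
  have hmul : ContinuousAt (fun q : ℝ × ℝ => q.1 * q.2) (c, x / c) :=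
    continuousAt_fst.mul continuousAt_snd
  have hmem : c * (x / c) ∈ Metric.ball x ε := by
    rw [mul_div_cancel₀ _ hcpos.ne']
    exact Metric.mem_ball_self hε
  obtain ⟨δ', hδ'pos, hδ'⟩ := cont_pick (f := fun a b => a * b) hmul Metric.isOpen_ball hmem
  obtain ⟨P, ⟨lP, hlPelem, hlPpart, hlPprod⟩, hPIoo, hPc⟩ :=
    reach_all hT0 hγm0 hγm1 hγp1 hαm0 hαm1 hαp1 hd hh hcIoo δ' hδ'pos
  obtain ⟨lb, u, hlbne, hlbelem, hlbpart, hlbprod, hub, huIcc, hupos⟩ :=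
    block hT0 hd hy₀ hδ'pos
  have hPpos : 0 < P := hlPprod ▸ List.prod_pos (fun t ht => Tstar_pos hT0 (hlPelem t ht))
  refine ⟨(lP ++ lb).prod, mem_TProd_of_adm ?_ ⟨?_, ?_⟩, ?_⟩
  · intro hnil
    exact hlbne (List.append_eq_nil_iff.1 hnil).2
  · intro t ht
    rcases List.mem_append.1 ht with h | h
    · exact hlPelem t h
    · exact hlbelem t h
  · refine partialsIn_append hlPpart hlbpart ?_
    intro z hz
    rw [hlPprod]
    have hb1 : P * γm ≤ P * z := mul_le_mul_of_nonneg_left hz.1 hPpos.le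
    have hb2 : P * z ≤ P * γp := mul_le_mul_of_nonneg_left hz.2 hPpos.le
    have hQ1 : αm < P * γm := by
      have := hPIoo.1
      rw [div_lt_iff₀ hγm0] at this
      linarith
    have hQ2 : P * γp < αp := by
      have := hPIoo.2
      rw [lt_div_iff₀ hγp0] at this
      linarith
    exact ⟨by linarith, by linarith⟩
  · rw [List.prod_append, hlPprod, hlbprod]
    have := hδ' P u hPc hub
    rw [Metric.mem_ball, Real.dist_eq] at this
    rw [Real.dist_eq, abs_sub_comm]
    exact this


end Main

end Stmt0Aux

theorem stmt0 (T : Set ℝ) (hT : T.Nonempty) (hT0 : T ⊆ Ioi 0)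
    (γm γp : ℝ) (hγm : γm ∈ Ioo (0:ℝ) 1) (hγp : 1 < γp)
    (hd : DenseInIcc T γm γp)
    (αm αp : ℝ) (hαm : αm ∈ Ioo (0:ℝ) 1) (hαp : 1 < αp)
    (h : γp / γm < αp / αm) :
    DenseInIcc T αm αp := by
  obtain ⟨hγm0, hγm1⟩ := hγm
  obtain ⟨hαm0, hαm1⟩ := hαm
  have hγp0 : 0 < γp := lt_trans one_pos hγp
  have hαp0 : 0 < αp := lt_trans one_pos hαp
  have hh : αm / γm < αp / γp := by
    rw [div_lt_div_iff₀ hγm0 hαm0] at h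
    rw [div_lt_div_iff₀ hγm0 hγp0]
    nlinarith
  have hsub : Ioo αm αp ⊆ closure (TProd T αm αp) := fun x hx =>
    Stmt0Aux.final hT0 hγm0 hγm1 hγp hαm0 hαm1 hαp hd hh hx
  show Icc αm αp ⊆ closure (TProd T αm αp)
  have hlt : αm < αp := lt_trans hαm1 hαp
  rw [← closure_Ioo hlt.ne]
  exact closure_minimal hsub isClosed_closure
end
end

section
/- For every nonempty T ⊆ (0,∞), define R_T = inf { γ₊/γ₋ : γ₋ ∈ (0,1), γ₊ ∈ (1,∞), and T_{γ₋,γ₊} is dense in [γ₋,γ₊] } (with inf ∅ = +∞). Then: (i) for all γ₋ ∈ (0,1) and γ₊ ∈ (1,∞) with γ₊/γ₋ > R_T, the set T_{γ₋,γ₊} is dense in [γ₋,γ₊]; (ii) for all γ₋ ∈ (0,1) and γ₊ ∈ (1,∞) with γ₊/γ₋ < R_T, the set T_{γ₋,γ₊} is not dense in [γ₋,γ₊]. -/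
open Set Filter Topology Pointwise

noncomputable section

lemma one_mem_Tstar (T : Set ℝ) : (1:ℝ) ∈ Tstar T := Or.inr rfl

lemma inv_mem_Tstar {T : Set ℝ} {t : ℝ} (h : t ∈ Tstar T) : t⁻¹ ∈ Tstar T := by
  rcases h with (h | ⟨s, hs, rfl⟩) | h
  · exact Or.inl (Or.inr ⟨t, h, rfl⟩)
  · simp only [inv_inv]; exact Or.inl (Or.inl hs)
  · simp only [mem_singleton_iff] at h; subst h; simpa using one_mem_Tstar T

lemma Tstar_pos {T : Set ℝ} (hT0 : T ⊆ Ioi 0) {t : ℝ} (h : t ∈ Tstar T) : 0 < t := by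
  rcases h with (h | ⟨s, hs, rfl⟩) | h
  · exact hT0 h
  · exact inv_pos.2 (hT0 hs)
  · simp only [mem_singleton_iff] at h; subst h; norm_num

/-- inductive characterization of `TProd` -/
inductive IsG (T : Set ℝ) (a b : ℝ) : ℝ → Prop
  | base {t : ℝ} : t ∈ Tstar T → t ∈ Icc a b → IsG T a b t
  | step {x t : ℝ} : IsG T a b x → t ∈ Tstar T → x * t ∈ Icc a b → IsG T a b (x * t)

lemma IsG.mem_Icc {T a b x} (h : IsG T a b x) : x ∈ Icc a b := by
  induction h with
  | base _ h2 => exact h2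
  | step _ _ h3 _ => exact h3

lemma IsG.pos {T a b x} (ha : 0 < a) (h : IsG T a b x) : 0 < x :=
  lt_of_lt_of_le ha h.mem_Icc.1

-- Finset helper lemmas
lemma filter_le_last (n : ℕ) (t : Fin (n+1) → ℝ) :
    ∏ i ∈ Finset.univ.filter (· ≤ Fin.last n), t i = ∏ i, t i := by
  rw [Finset.filter_true_of_mem]
  exact fun i _ => Fin.le_last i

lemma filter_le_castSucc (n : ℕ) (k : Fin n) (t : Fin (n+1) → ℝ) :
    ∏ i ∈ Finset.univ.filter (· ≤ Fin.castSucc k), t i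
      = ∏ i ∈ Finset.univ.filter (· ≤ k), t (Fin.castSucc i) := by
  symm
  apply Finset.prod_bij (fun (j : Fin n) _ => Fin.castSucc j)
  · intro j hj
    simp only [Finset.mem_filter, Finset.mem_univ, true_and] at hj ⊢
    exact Fin.castSucc_le_castSucc_iff.2 hj
  · intro a _ b _ h
    exact Fin.castSucc_injective n h
  · intro i hi
    simp only [Finset.mem_filter, Finset.mem_univ, true_and] at hi
    have hlt : (i : ℕ) < n := lt_of_le_of_lt (by exact_mod_cast hi) k.isLt
    refine ⟨⟨i, hlt⟩, ?_, Fin.ext rfl⟩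
    simp only [Finset.mem_filter, Finset.mem_univ, true_and]
    rwa [Fin.le_def] at hi ⊢
  · intro j _
    rfl

lemma TProdN_succ {T : Set ℝ} {a b : ℝ} {n : ℕ} {x : ℝ} :
    x ∈ TProdN T a b (n+1) ↔
      ∃ y ∈ TProdN T a b n, ∃ t ∈ Tstar T, x = y * t ∧ x ∈ Icc a b := by
  constructor
  · rintro ⟨t, ht, rfl, hpart⟩
    refine ⟨∏ i, t (Fin.castSucc i), ⟨fun i => t (Fin.castSucc i), fun i => ht _, rfl,
      fun k => ?_⟩, t (Fin.last n), ht _, ?_, ?_⟩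
    · rw [← filter_le_castSucc]; exact hpart _
    · rw [Fin.prod_univ_castSucc]
    · rw [← filter_le_last n t]; exact hpart _
  · rintro ⟨y, ⟨s, hs, rfl, hpart⟩, t, ht, rfl, hIcc⟩
    refine ⟨Fin.snoc s t, fun i => ?_, ?_, fun k => ?_⟩
    · induction i using Fin.lastCases with
      | last => simpa using ht
      | cast j => simpa using hs j
    · rw [Fin.prod_univ_castSucc]; simp
    · induction k using Fin.lastCases with
      | last =>
        rw [filter_le_last, Fin.prod_univ_castSucc]
        simpa using hIcc
      | cast j =>
        rw [filter_le_castSucc]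
        simpa using hpart j



lemma TProdN_one {T : Set ℝ} {a b x : ℝ} :
    x ∈ TProdN T a b 1 ↔ x ∈ Tstar T ∧ x ∈ Icc a b := by
  constructor
  · rintro ⟨t, ht, rfl, hpart⟩
    have h0 := hpart 0
    have : (Finset.univ.filter (· ≤ (0 : Fin 1))) = Finset.univ := by
      apply Finset.filter_true_of_mem; intro i _; exact le_of_eq (Subsingleton.elim i 0)
    rw [this] at h0
    simp only [Fin.prod_univ_one] at h0 ⊢
    exact ⟨ht 0, h0⟩
  · rintro ⟨h1, h2⟩
    refine ⟨fun _ => x, fun _ => h1, by simp, fun k => ?_⟩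
    have : (Finset.univ.filter (· ≤ k)) = Finset.univ := by
      apply Finset.filter_true_of_mem; intro i _
      exact le_of_eq (Subsingleton.elim i k)
    rw [this]; simpa using h2

lemma mem_TProd_iff_isG {T : Set ℝ} {a b x : ℝ} :
    x ∈ TProd T a b ↔ IsG T a b x := by
  constructor
  · rintro h
    simp only [TProd, mem_iUnion, mem_setOf_eq] at h
    obtain ⟨n, hn, hx⟩ := h
    induction n generalizing x with
    | zero => omega
    | succ m ih =>
      rcases Nat.eq_or_lt_of_le hn with h1 | h1
      · rw [← h1] at hx
        rw [TProdN_one] at hx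
        exact IsG.base hx.1 hx.2
      · rw [TProdN_succ] at hx
        obtain ⟨y, hy, t, ht, rfl, hIcc⟩ := hx
        exact IsG.step (ih (by omega) hy) ht hIcc
  · intro h
    induction h with
    | base h1 h2 =>
      exact mem_biUnion (by norm_num : (1:ℕ) ∈ {n : ℕ | 1 ≤ n}) (TProdN_one.2 ⟨h1, h2⟩)
    | step h1 h2 h3 ih =>
      simp only [TProd, mem_iUnion, mem_setOf_eq] at ih ⊢
      obtain ⟨n, hn, hy⟩ := ih
      exact ⟨n + 1, by omega, TProdN_succ.2 ⟨_, hy, _, h2, rfl, h3⟩⟩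

lemma IsG.mono {T : Set ℝ} {a b a' b' x : ℝ} (ha : a' ≤ a) (hb : b ≤ b')
    (h : IsG T a b x) : IsG T a' b' x := by
  induction h with
  | base h1 h2 => exact IsG.base h1 ⟨ha.trans h2.1, h2.2.trans hb⟩
  | step h1 h2 h3 ih => exact IsG.step ih h2 ⟨ha.trans h3.1, h3.2.trans hb⟩

lemma IsG.prepend {T : Set ℝ} {a b c d t x : ℝ} (ht : t ∈ Tstar T) (h : IsG T a b x)
    (h1 : c ≤ t * a) (h2 : t * b ≤ d) (h3 : t ∈ Icc c d) (ht0 : 0 ≤ t) :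
    IsG T c d (t * x) := by
  induction h with
  | base hs hIcc =>
    exact IsG.step (IsG.base ht h3) hs
      ⟨h1.trans (by nlinarith [hIcc.1]), le_trans (by nlinarith [hIcc.2]) h2⟩
  | @step y s hy hs hIcc ih =>
    have : t * (y * s) = (t * y) * s := by ring
    rw [this]
    exact IsG.step ih hs
      ⟨h1.trans (by nlinarith [hIcc.1]), le_trans (by nlinarith [hIcc.2]) h2⟩

lemma IsG.concat {T : Set ℝ} {γm γp a b p x : ℝ} (hp : IsG T γm γp p)
    (hx : IsG T a b x) (h1 : γm ≤ p * a) (h2 : p * b ≤ γp) (hp0 : 0 ≤ p) :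
    IsG T γm γp (p * x) := by
  induction hx with
  | @base s hs hIcc =>
    exact IsG.step hp hs ⟨h1.trans (by nlinarith [hIcc.1]), le_trans (by nlinarith [hIcc.2]) h2⟩
  | @step y s hy hs hIcc ih =>
    have : p * (y * s) = (p * y) * s := by ring
    rw [this]
    exact IsG.step ih hs
      ⟨h1.trans (by nlinarith [hIcc.1]), le_trans (by nlinarith [hIcc.2]) h2⟩

lemma IsG.revinv {T : Set ℝ} {a b x : ℝ} (ha : 0 < a) (ha1 : a ≤ 1) (hb1 : 1 ≤ b)
    (h : IsG T a b x) : IsG T (a / x) (b / x) x⁻¹ := by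
  induction h with
  | @base t hs hIcc =>
    have ht0 : 0 < t := lt_of_lt_of_le ha hIcc.1
    exact IsG.base (inv_mem_Tstar hs)
      ⟨by rw [div_le_iff₀ ht0, inv_mul_cancel₀ ht0.ne'];  exact ha1,
       by rw [le_div_iff₀ ht0, inv_mul_cancel₀ ht0.ne']; exact hb1⟩
  | @step y t hy hs hIcc ih =>
    have hy0 : 0 < y := hy.pos ha
    have hyt0 : 0 < y * t := lt_of_lt_of_le ha hIcc.1
    have ht0 : 0 < t := by nlinarith
    have hya : a ≤ y := hy.mem_Icc.1
    have hyb : y ≤ b := hy.mem_Icc.2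
    have hrw : (y * t)⁻¹ = t⁻¹ * y⁻¹ := by rw [mul_inv, mul_comm]
    rw [hrw]
    apply IsG.prepend (inv_mem_Tstar hs) ih
    · exact le_of_eq (by rw [div_eq_mul_inv, div_eq_mul_inv, mul_inv]; ring)
    · exact le_of_eq (by rw [div_eq_mul_inv, div_eq_mul_inv, mul_inv]; ring)
    · constructor
      · rw [div_le_iff₀ hyt0]
        calc a ≤ y := hya
        _ = t⁻¹ * (y * t) := by rw [mul_comm y t, ← mul_assoc, inv_mul_cancel₀ ht0.ne', one_mul]
      · rw [le_div_iff₀ hyt0]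
        calc t⁻¹ * (y * t) = y := by rw [mul_comm y t, ← mul_assoc, inv_mul_cancel₀ ht0.ne', one_mul]
        _ ≤ b := hyb
    · positivity

set_option maxHeartbeats 4000000 in
lemma main_dense {T : Set ℝ} {γm γp γm' γp' : ℝ}
    (hm0 : 0 < γm) (hm1 : γm < 1) (hp1 : 1 < γp)
    (hm0' : 0 < γm') (hm1' : γm' < 1) (hp1' : 1 < γp')
    (hlt : γp' / γm' < γp / γm)
    (hd : DenseInIcc T γm' γp') : DenseInIcc T γm γp := by
  have hp0 : (0:ℝ) < γp := by linarith
  have hp0' : (0:ℝ) < γp' := by linarith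
  obtain ⟨cm, hcm_def⟩ : ∃ y : ℝ, y = γm / γm' := ⟨_, rfl⟩
  obtain ⟨cp, hcp_def⟩ : ∃ y : ℝ, y = γp / γp' := ⟨_, rfl⟩
  have hcm0 : 0 < cm := by rw [hcm_def]; positivity
  have hc : cm < cp := by
    rw [hcm_def, hcp_def, div_lt_div_iff₀ hm0' hp0']
    nlinarith [(div_lt_div_iff₀ hm0' hm0).1 hlt]
  have hcmlt : cm < γm'⁻¹ := by
    rw [hcm_def, div_lt_iff₀ hm0', inv_mul_cancel₀ hm0'.ne']; exact hm1
  have hcplt : γp'⁻¹ < cp := by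
    rw [hcp_def, lt_div_iff₀ hp0', inv_mul_cancel₀ hp0'.ne']; exact hp1
  -- density accessor
  have hdens : ∀ v ∈ Icc γm' γp', ∀ ε > 0, ∃ w, IsG T γm' γp' w ∧ |w - v| < ε := by
    intro v hv ε hε
    have h2 := hd hv
    rw [Metric.mem_closure_iff] at h2
    obtain ⟨w, hw, hdist⟩ := h2 ε hε
    refine ⟨w, mem_TProd_iff_isG.1 hw, ?_⟩
    rw [Real.dist_eq] at hdist
    rw [abs_sub_comm]; exact hdist
  -- the approximable-points predicate
  set S : ℝ → Prop := fun q => ∀ ε > 0, ∃ p, IsG T γm γp p ∧ p ∈ Ioo cm cp ∧ |p - q| < ε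
    with hS_def
  have hconcat : ∀ p w : ℝ, IsG T γm γp p → IsG T γm' γp' w → p ∈ Ioo cm cp →
      IsG T γm γp (p * w) := by
    intro p w hp hw hpmem
    apply hp.concat hw
    · have h1 : cm ≤ p := hpmem.1.le
      rw [hcm_def, div_le_iff₀ hm0'] at h1
      exact h1
    · have h2 : p ≤ cp := hpmem.2.le
      rw [hcp_def, le_div_iff₀ hp0'] at h2
      exact h2
    · exact le_of_lt (lt_trans hcm0 hpmem.1)
  -- step lemma
  have hstep : ∀ q q', S q → 0 < q → q' ∈ Ioo cm cp → q' / q ∈ Ioo γm' γp' → S q' := by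
    intro q q' hSq hq0 hq' hratio
    intro ε hε
    have hcont : ∀ᶠ p in 𝓝 q, q' / p ∈ Ioo γm' γp' ∧ 0 < p := by
      have h1 : ContinuousAt (fun p : ℝ => q' / p) q :=
        ContinuousAt.div continuousAt_const continuousAt_id hq0.ne'
      have h2 : ∀ᶠ y in 𝓝 (q' / q), y ∈ Ioo γm' γp' :=
        eventually_of_mem (Ioo_mem_nhds hratio.1 hratio.2) (fun y hy => hy)
      exact (h1.eventually h2).and (eventually_gt_nhds hq0)
    obtain ⟨δ, hδ0, hδ⟩ := Metric.eventually_nhds_iff.1 hcont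
    obtain ⟨p, hpG, hpmem, hpq⟩ := hSq δ hδ0
    obtain ⟨hvmem, hp0⟩ := hδ (show dist p q < δ by rwa [Real.dist_eq])
    obtain ⟨E, hE_def⟩ : ∃ y : ℝ, y = min ε (min (q' - cm) (cp - q')) := ⟨_, rfl⟩
    have hE0 : 0 < E := by
      rw [hE_def]
      apply lt_min hε
      exact lt_min (by linarith [hq'.1]) (by linarith [hq'.2])
    obtain ⟨w, hwG, hwv⟩ := hdens (q' / p) (Ioo_subset_Icc_self hvmem) (E / (2 * p))
      (div_pos hE0 (by linarith))
    have hkey : |p * w - q'| < E / 2 := by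
      have he : p * w - q' = p * (w - q' / p) := by
        rw [mul_sub, mul_div_cancel₀ _ hp0.ne']
      rw [he, abs_mul, abs_of_pos hp0]
      calc p * |w - q' / p| < p * (E / (2 * p)) := mul_lt_mul_of_pos_left hwv hp0
      _ = E / 2 := by field_simp
    rw [abs_lt] at hkey
    have hEε : E ≤ ε := by rw [hE_def]; exact min_le_left _ _
    have hE1 : E ≤ q' - cm := by
      rw [hE_def]; exact le_trans (min_le_right _ _) (min_le_left _ _)
    have hE2 : E ≤ cp - q' := by
      rw [hE_def]; exact le_trans (min_le_right _ _) (min_le_right _ _)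
    refine ⟨p * w, hconcat p w hpG hwG hpmem, ⟨by linarith, by linarith⟩, ?_⟩
    rw [abs_lt]
    constructor <;> linarith
  -- base point
  obtain ⟨L0, hL0_def⟩ : ∃ y : ℝ, y = max cm γp'⁻¹ := ⟨_, rfl⟩
  obtain ⟨U0, hU0_def⟩ : ∃ y : ℝ, y = min cp γm'⁻¹ := ⟨_, rfl⟩
  have hL0U0 : L0 < U0 := by
    rw [hL0_def, hU0_def]
    apply max_lt <;> apply lt_min
    · exact hc
    · exact hcmlt
    · exact hcplt
    · exact inv_strictAnti₀ hm0' (lt_trans hm1' hp1')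
  obtain ⟨q0, hq0_def⟩ : ∃ y : ℝ, y = (L0 + U0) / 2 := ⟨_, rfl⟩
  have hq0L : L0 < q0 := by rw [hq0_def]; linarith
  have hq0U : q0 < U0 := by rw [hq0_def]; linarith
  have hq0mem : q0 ∈ Ioo cm cp := by
    constructor
    · exact lt_of_le_of_lt (by rw [hL0_def]; exact le_max_left _ _) hq0L
    · exact lt_of_lt_of_le hq0U (by rw [hU0_def]; exact min_le_left _ _)
  have hq0pos : 0 < q0 := lt_trans hcm0 hq0mem.1
  have hq0inv : q0⁻¹ ∈ Ioo γm' γp' := by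
    constructor
    · have h1 : q0 < γm'⁻¹ := lt_of_lt_of_le hq0U (by rw [hU0_def]; exact min_le_right _ _)
      have h2 := inv_strictAnti₀ hq0pos h1
      rwa [inv_inv] at h2
    · have h1 : γp'⁻¹ < q0 := lt_of_le_of_lt (by rw [hL0_def]; exact le_max_right _ _) hq0L
      have h2 := inv_strictAnti₀ (inv_pos.2 hp0') h1
      rwa [inv_inv] at h2
  have hbase : S q0 := by
    intro ε hε
    have hcont : ∀ᶠ w in 𝓝 q0⁻¹, (w⁻¹ ∈ Ioo cm cp ∧ |w⁻¹ - q0| < ε) ∧ 0 < w := by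
      have h1 : ContinuousAt (fun w : ℝ => w⁻¹) q0⁻¹ :=
        continuousAt_inv₀ (inv_pos.2 hq0pos).ne'
      have h2 : ∀ᶠ y in 𝓝 ((q0⁻¹)⁻¹ : ℝ), y ∈ Ioo cm cp ∧ |y - q0| < ε := by
        rw [inv_inv]
        have hA : ∀ᶠ y in 𝓝 q0, y ∈ Ioo cm cp :=
          eventually_of_mem (Ioo_mem_nhds hq0mem.1 hq0mem.2) (fun y hy => hy)
        have hB : ∀ᶠ y in 𝓝 q0, |y - q0| < ε := by
          filter_upwards [Metric.ball_mem_nhds q0 hε] with y hy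
          rw [Metric.mem_ball, Real.dist_eq] at hy
          exact hy
        exact hA.and hB
      exact (h1.eventually h2).and (eventually_gt_nhds (inv_pos.2 hq0pos))
    obtain ⟨δ, hδ0, hδ⟩ := Metric.eventually_nhds_iff.1 hcont
    obtain ⟨w, hwG, hwv⟩ := hdens q0⁻¹ (Ioo_subset_Icc_self hq0inv) δ hδ0
    obtain ⟨⟨hwmem, hwq0⟩, hw0⟩ := hδ (show dist w q0⁻¹ < δ by rwa [Real.dist_eq])
    refine ⟨w⁻¹, ?_, hwmem, hwq0⟩
    have hrev := hwG.revinv hm0' hm1'.le hp1'.le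
    apply hrev.mono
    · rw [le_div_iff₀ hw0]
      have h1 : cm ≤ w⁻¹ := hwmem.1.le
      rw [hcm_def] at h1
      have key := mul_le_mul_of_nonneg_right h1 (le_of_lt (mul_pos hw0 hm0'))
      have eL : γm / γm' * (w * γm') = γm * w := by field_simp
      have eR : w⁻¹ * (w * γm') = γm' := by
        rw [← mul_assoc, inv_mul_cancel₀ hw0.ne', one_mul]
      rw [eL, eR] at key
      exact key
    · rw [div_le_iff₀ hw0]
      have h1 : w⁻¹ ≤ cp := hwmem.2.le
      rw [hcp_def] at h1
      have key := mul_le_mul_of_nonneg_right h1 (le_of_lt (mul_pos hw0 hp0'))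
      have eL : w⁻¹ * (w * γp') = γp' := by
        rw [← mul_assoc, inv_mul_cancel₀ hw0.ne', one_mul]
      have eR : γp / γp' * (w * γp') = γp * w := by field_simp
      rw [eL, eR] at key
      exact key
  -- the stepping factor θ
  obtain ⟨M, hM_def⟩ : ∃ y : ℝ, y = min γp' γm'⁻¹ := ⟨_, rfl⟩
  have hM1 : 1 < M := by
    rw [hM_def]
    exact lt_min hp1' ((one_lt_inv_iff₀).2 ⟨hm0', hm1'⟩)
  have hM0 : 0 < M := lt_trans one_pos hM1
  obtain ⟨θ, hθ_def⟩ : ∃ y : ℝ, y = Real.sqrt M := ⟨_, rfl⟩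
  have hθ1 : 1 < θ := by
    rw [hθ_def, show (1:ℝ) = Real.sqrt 1 by simp]
    exact Real.sqrt_lt_sqrt (by norm_num) hM1
  have hθ0 : 0 < θ := lt_trans one_pos hθ1
  have hθM : θ < M := by
    rw [hθ_def]
    have h2 : Real.sqrt M < Real.sqrt (M ^ 2) := Real.sqrt_lt_sqrt hM0.le (by nlinarith)
    rwa [Real.sqrt_sq hM0.le] at h2
  have hθp : θ < γp' := lt_of_lt_of_le hθM (by rw [hM_def]; exact min_le_left _ _)
  have hθm : γm' < θ⁻¹ := by
    have h1 : M ≤ γm'⁻¹ := by rw [hM_def]; exact min_le_right _ _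
    have h2 : γm' ≤ M⁻¹ := by
      rw [le_inv_comm₀ hm0' hM0]
      exact h1
    have h3 : M⁻¹ < θ⁻¹ := inv_strictAnti₀ hθ0 hθM
    linarith
  have hθinv1 : θ⁻¹ < 1 := by rw [inv_lt_one_iff₀]; right; exact hθ1
  -- induction: all points within θ^n of q0 satisfy S
  have hind : ∀ n : ℕ, ∀ q, q ∈ Ioo cm cp → q0 / θ ^ n ≤ q → q ≤ q0 * θ ^ n → S q := by
    intro n
    induction n with
    | zero =>
      intro q hq h1 h2
      simp only [pow_zero, div_one, mul_one] at h1 h2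
      have : q = q0 := le_antisymm h2 h1
      rw [this]
      exact hbase
    | succ k ih =>
      intro q hq h1 h2
      have hθk0 : (0:ℝ) < θ ^ k := pow_pos hθ0 k
      have hθk1 : (1:ℝ) ≤ θ ^ k := one_le_pow₀ hθ1.le
      have hLq0 : q0 / θ ^ k ≤ q0 := by
        rw [div_le_iff₀ hθk0]
        nlinarith
      have hLpos : (0:ℝ) < q0 / θ ^ k := div_pos hq0pos hθk0
      have hq0Uk : q0 ≤ q0 * θ ^ k := le_mul_of_one_le_right hq0pos.le hθk1
      have hqpos : 0 < q := lt_trans hcm0 hq.1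
      obtain ⟨q'', hq''_def⟩ : ∃ y : ℝ, y = max (min q (q0 * θ ^ k)) (q0 / θ ^ k) := ⟨_, rfl⟩
      have hq''L : q0 / θ ^ k ≤ q'' := by rw [hq''_def]; exact le_max_right _ _
      have hq''U : q'' ≤ q0 * θ ^ k := by
        rw [hq''_def]
        exact max_le (min_le_right _ _) (by nlinarith)
      have hq''pos : 0 < q'' := lt_of_lt_of_le hLpos hq''L
      have hq''mem : q'' ∈ Ioo cm cp := by
        constructor
        · have hle : min q (q0 * θ ^ k) ≤ q'' := by rw [hq''_def]; exact le_max_left _ _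
          have hminmem : cm < min q (q0 * θ ^ k) :=
            lt_min hq.1 (lt_of_lt_of_le hq0mem.1 hq0Uk)
          linarith
        · have h3 : min q (q0 * θ ^ k) < cp := lt_of_le_of_lt (min_le_left _ _) hq.2
          have h4 : q0 / θ ^ k < cp := lt_of_le_of_lt hLq0 hq0mem.2
          rw [hq''_def]
          exact max_lt h3 h4
      have hratio : q / q'' ∈ Ioo γm' γp' := by
        have hrlo : θ⁻¹ ≤ q / q'' := by
          rw [le_div_iff₀ hq''pos]
          rcases le_total q (q0 / θ ^ k) with hcase | hcase
          · have hmin : min q (q0 * θ ^ k) = q := min_eq_left (by nlinarith)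
            have hq''eq : q'' = q0 / θ ^ k := by
              rw [hq''_def, hmin]
              exact max_eq_right hcase
            rw [hq''eq]
            have he : θ⁻¹ * (q0 / θ ^ k) = q0 / θ ^ (k+1) := by
              rw [inv_mul_eq_div, div_div, ← pow_succ]
            rw [he]
            exact h1
          · have hq''le : q'' ≤ q := by
              rw [hq''_def]
              exact max_le (min_le_left _ _) hcase
            nlinarith
        have hrhi : q / q'' ≤ θ := by
          rw [div_le_iff₀ hq''pos]
          rcases le_total q (q0 * θ ^ k) with hcase | hcase
          · have hq''ge : q ≤ q'' := by
              rw [hq''_def, min_eq_left hcase]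
              exact le_max_left _ _
            nlinarith
          · have hq''eq : q'' = q0 * θ ^ k := by
              rw [hq''_def, min_eq_right hcase]
              exact max_eq_left (by nlinarith)
            rw [hq''eq]
            rw [pow_succ] at h2
            nlinarith
        exact ⟨lt_of_lt_of_le hθm hrlo, lt_of_le_of_lt hrhi hθp⟩
      exact hstep q'' q (ih q'' hq''mem hq''L hq''U) hq''pos hq hratio
  have hallS : ∀ q, q ∈ Ioo cm cp → S q := by
    intro q hq
    have hqpos : 0 < q := lt_trans hcm0 hq.1
    obtain ⟨n, hn⟩ := pow_unbounded_of_one_lt (max (q0 / q) (q / q0)) hθ1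
    have hθn0 : (0:ℝ) < θ ^ n := pow_pos hθ0 n
    apply hind n q hq
    · have h1 : q0 / q ≤ θ ^ n := le_of_lt (lt_of_le_of_lt (le_max_left _ _) hn)
      rw [div_le_iff₀ hqpos] at h1
      rw [div_le_iff₀ hθn0]
      nlinarith
    · have h1 : q / q0 ≤ θ ^ n := le_of_lt (lt_of_le_of_lt (le_max_right _ _) hn)
      rw [div_le_iff₀ hq0pos] at h1
      nlinarith
  -- final assembly
  have hsub : Ioo γm γp ⊆ closure (TProd T γm γp) := by
    intro x hx
    rw [Metric.mem_closure_iff]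
    intro ε hε
    have hx0 : 0 < x := lt_trans hm0 hx.1
    obtain ⟨L1, hL1_def⟩ : ∃ y : ℝ, y = max cm (x / γp') := ⟨_, rfl⟩
    obtain ⟨U1, hU1_def⟩ : ∃ y : ℝ, y = min cp (x / γm') := ⟨_, rfl⟩
    have hL1U1 : L1 < U1 := by
      rw [hL1_def, hU1_def]
      apply max_lt <;> apply lt_min
      · exact hc
      · rw [hcm_def, div_lt_div_iff₀ hm0' hm0']
        nlinarith [hx.1]
      · rw [hcp_def, div_lt_div_iff₀ hp0' hp0']
        nlinarith [hx.2]
      · exact div_lt_div_of_pos_left hx0 hm0' (lt_trans hm1' hp1')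
    obtain ⟨q, hq_def⟩ : ∃ y : ℝ, y = (L1 + U1) / 2 := ⟨_, rfl⟩
    have hqL : L1 < q := by rw [hq_def]; linarith
    have hqU : q < U1 := by rw [hq_def]; linarith
    have hqmem : q ∈ Ioo cm cp := by
      constructor
      · exact lt_of_le_of_lt (by rw [hL1_def]; exact le_max_left _ _) hqL
      · exact lt_of_lt_of_le hqU (by rw [hU1_def]; exact min_le_left _ _)
    have hqpos : 0 < q := lt_trans hcm0 hqmem.1
    have hxq : x / q ∈ Ioo γm' γp' := by
      constructor
      · have h1 : q < x / γm' := lt_of_lt_of_le hqU (by rw [hU1_def]; exact min_le_right _ _)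
        rw [lt_div_iff₀ hm0'] at h1
        rw [lt_div_iff₀ hqpos]
        nlinarith
      · have h1 : x / γp' < q := lt_of_le_of_lt (by rw [hL1_def]; exact le_max_right _ _) hqL
        rw [div_lt_iff₀ hp0'] at h1
        rw [div_lt_iff₀ hqpos]
        nlinarith
    have hcont : ∀ᶠ p in 𝓝 q, x / p ∈ Ioo γm' γp' ∧ 0 < p := by
      have h1 : ContinuousAt (fun p : ℝ => x / p) q :=
        ContinuousAt.div continuousAt_const continuousAt_id hqpos.ne'
      have h2 : ∀ᶠ y in 𝓝 (x / q), y ∈ Ioo γm' γp' :=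
        eventually_of_mem (Ioo_mem_nhds hxq.1 hxq.2) (fun y hy => hy)
      exact (h1.eventually h2).and (eventually_gt_nhds hqpos)
    obtain ⟨δ, hδ0, hδ⟩ := Metric.eventually_nhds_iff.1 hcont
    obtain ⟨p, hpG, hpmem, hpq⟩ := hallS q hqmem δ hδ0
    obtain ⟨hvmem, hp0⟩ := hδ (show dist p q < δ by rwa [Real.dist_eq])
    obtain ⟨w, hwG, hwv⟩ := hdens (x / p) (Ioo_subset_Icc_self hvmem) (ε / (2 * p))
      (div_pos hε (by linarith))
    refine ⟨p * w, mem_TProd_iff_isG.2 (hconcat p w hpG hwG hpmem), ?_⟩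
    rw [Real.dist_eq]
    have he : x - p * w = -(p * (w - x / p)) := by
      rw [mul_sub, mul_div_cancel₀ _ hp0.ne']
      ring
    rw [he, abs_neg, abs_mul, abs_of_pos hp0]
    calc p * |w - x / p| < p * (ε / (2 * p)) := mul_lt_mul_of_pos_left hwv hp0
    _ = ε / 2 := by field_simp
    _ < ε := by linarith
  intro x hx
  have hIcc : Icc γm γp = closure (Ioo γm γp) := (closure_Ioo (by linarith : γm ≠ γp)).symm
  rw [hIcc] at hx
  have h2 := closure_mono hsub hx
  rwa [closure_closure] at h2

theorem stmt1 (T : Set ℝ) (hT : T.Nonempty) (hT0 : T ⊆ Ioi 0) :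
    (∀ γm γp : ℝ, γm ∈ Ioo (0:ℝ) 1 → 1 < γp →
      limitRatio T < ENNReal.ofReal (γp / γm) → DenseInIcc T γm γp) ∧
    (∀ γm γp : ℝ, γm ∈ Ioo (0:ℝ) 1 → 1 < γp →
      ENNReal.ofReal (γp / γm) < limitRatio T → ¬ DenseInIcc T γm γp) := by
  constructor
  · intro γm γp hm hp hlt
    rw [limitRatio, sInf_lt_iff] at hlt
    obtain ⟨r, ⟨γm', γp', hm', hp', hd', rfl⟩, hr⟩ := hlt
    have hq : (0:ℝ) < γp / γm := div_pos (by linarith) hm.1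
    have hlt' : γp' / γm' < γp / γm := (ENNReal.ofReal_lt_ofReal_iff hq).1 hr
    exact main_dense hm.1 hm.2 hp hm'.1 hm'.2 hp' hlt' hd'
  · intro γm γp hm hp hlt hD
    have hle : limitRatio T ≤ ENNReal.ofReal (γp / γm) :=
      sInf_le ⟨γm, γp, hm, hp, hD, rfl⟩
    exact absurd (lt_of_le_of_lt hle hlt) (lt_irrefl _)
end
end

section
/- For every nonempty T ⊆ (0,∞) one has R_T ≥ inf(T* ∩ (1,∞)) (with inf ∅ = +∞). -/
/-! Suppose `T_{γ₋,γ₊}` is dense in `[γ₋, γ₊]` while `γ₊/γ₋` lies below every element of `T*`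
exceeding `1`. Then no factor `t > 1` can occur in an admissible product: the partial product before
it is at least `γ₋`, so the next one would be at least `γ₋ t > γ₊`. Hence all factors are in `(0, 1]`,
`T_{γ₋,γ₊} ⊆ (0, 1]`, and it cannot accumulate at `γ₊ > 1`. -/

open Set Filter Topology Pointwise

noncomputable section

lemma pos_of_mem_Tstar {T : Set ℝ} (hT0 : T ⊆ Ioi 0) {x : ℝ} (hx : x ∈ Tstar T) : 0 < x := by
  rcases hx with (hxT | ⟨y, hy, rfl⟩) | rfl
  · exact hT0 hxT
  · exact inv_pos.mpr (hT0 hy)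
  · exact one_pos

lemma lt_of_ofReal_lt_biInf {S : Set ℝ} {r x : ℝ}
    (h : ENNReal.ofReal r < ⨅ y ∈ S, ENNReal.ofReal y) (hx : x ∈ S) : r < x :=
  (ENNReal.ofReal_lt_ofReal_iff'.mp (h.trans_le (biInf_le _ hx))).1

section PartialProducts

variable {ι : Type*} [LinearOrder ι] [LocallyFiniteOrderBot ι] [PredOrder ι]
  {t : ι → ℝ} {γm γp : ℝ}

lemma le_prod_Iio_of_forall_prod_Iic_mem_Icc (hγm1 : γm ≤ 1)
    (hp : ∀ k, ∏ i ∈ Finset.Iic k, t i ∈ Icc γm γp) (j : ι) :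
    γm ≤ ∏ i ∈ Finset.Iio j, t i := by
  by_cases hj : IsMin j
  · simpa [hj.finsetIio_eq] using hγm1
  · rw [← Finset.Iic_pred_eq_Iio_of_not_isMin hj]
    exact (hp _).1

lemma le_one_of_forall_prod_Iic_mem_Icc (hγm0 : 0 < γm) (hγm1 : γm ≤ 1)
    (hgap : ∀ i, 1 < t i → γp / γm < t i)
    (hp : ∀ k, ∏ i ∈ Finset.Iic k, t i ∈ Icc γm γp) (j : ι) : t j ≤ 1 := by
  by_contra! hj
  have hprev := le_prod_Iio_of_forall_prod_Iic_mem_Icc hγm1 hp j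
  have hcur := (hp j).2
  rw [← Finset.Iio_insert, Finset.prod_insert Finset.notMem_Iio_self] at hcur
  have hjump : γp < t j * γm := (div_lt_iff₀ hγm0).mp (hgap j hj)
  nlinarith

end PartialProducts

lemma TProd_subset_Iic_one {T : Set ℝ} (hT0 : T ⊆ Ioi 0) {γm γp : ℝ} (hγm0 : 0 < γm)
    (hγm1 : γm ≤ 1) (hgap : ∀ x ∈ Tstar T, 1 < x → γp / γm < x) :
    TProd T γm γp ⊆ Iic 1 := by
  intro x hx
  simp only [TProd, mem_iUnion] at hx
  obtain ⟨n, -, t, ht, rfl, hp⟩ := hx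
  simp only [Finset.filter_ge_eq_Iic] at hp
  exact Finset.prod_le_one (fun i _ => (pos_of_mem_Tstar hT0 (ht i)).le) fun i _ =>
    le_one_of_forall_prod_Iic_mem_Icc hγm0 hγm1 (fun i => hgap _ (ht i)) hp i

theorem stmt4_general (T : Set ℝ) (hT0 : T ⊆ Ioi 0) :
    (⨅ x ∈ Tstar T ∩ Ioi (1:ℝ), ENNReal.ofReal x) ≤ limitRatio T := by
  refine le_sInf ?_
  rintro _ ⟨γm, γp, ⟨hγm0, hγm1⟩, hγp, hdense, rfl⟩
  by_contra! hlt
  have hgap : ∀ x ∈ Tstar T, 1 < x → γp / γm < x := fun x hx hx1 =>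
    lt_of_ofReal_lt_biInf hlt ⟨hx, hx1⟩
  have hγp_mem : γp ∈ closure (Iic (1:ℝ)) :=
    closure_mono (TProd_subset_Iic_one hT0 hγm0 hγm1.le hgap)
      (hdense (right_mem_Icc.mpr (hγm1.trans hγp).le))
  rw [closure_Iic] at hγp_mem
  exact absurd hγp_mem (not_le.mpr hγp)

theorem stmt4 (T : Set ℝ) (hT : T.Nonempty) (hT0 : T ⊆ Ioi 0) :
    (⨅ x ∈ Tstar T ∩ Ioi (1:ℝ), ENNReal.ofReal x) ≤ limitRatio T :=
  stmt4_general T hT0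
end
end

section
/- If T = {a,b} with a ∈ (0,1), b ∈ (1,∞) and log a / log b irrational, then R_T = b/a. -/
open Set Filter Topology Pointwise

noncomputable section

/-- Pigeonhole: small nonzero `k*θ - N` with `k ≥ 1`. -/
lemma aux_exists_small (θ : ℝ) (hθ : Irrational θ) (ε : ℝ) (hε : 0 < ε) :
    ∃ (k : ℕ) (N : ℤ), 1 ≤ k ∧ (k : ℝ) * θ - N ≠ 0 ∧ |(k : ℝ) * θ - N| < ε := by
  obtain ⟨M, hM⟩ := exists_nat_one_div_lt hε
  have hfl0 : ∀ k : ℕ, 0 ≤ ⌊Int.fract ((k:ℝ) * θ) * (M+1)⌋ := by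
    intro k
    apply Int.floor_nonneg.2
    have h0 : (0:ℝ) ≤ Int.fract ((k:ℝ) * θ) := Int.fract_nonneg _
    positivity
  have hmaps : ∀ k ∈ Finset.range (M + 2), (⌊Int.fract ((k:ℝ) * θ) * (M+1)⌋).toNat ∈ Finset.range (M+1) := by
    intro k _
    have h1 : Int.fract ((k:ℝ) * θ) < 1 := Int.fract_lt_one _
    have : (⌊Int.fract ((k:ℝ) * θ) * (M+1)⌋ : ℝ) < (M+1 : ℝ) := by
      calc (⌊Int.fract ((k:ℝ) * θ) * (M+1)⌋ : ℝ) ≤ Int.fract ((k:ℝ) * θ) * (M+1) := Int.floor_le _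
      _ < 1 * (M+1) := by
            apply mul_lt_mul_of_pos_right h1; positivity
      _ = (M+1 : ℝ) := by ring
    have hlt : ⌊Int.fract ((k:ℝ) * θ) * (M+1)⌋ < (M+1 : ℤ) := by exact_mod_cast this
    have := hfl0 k
    simp only [Finset.mem_range]
    omega
  obtain ⟨i, hi, j, hj, hij, heq⟩ := Finset.exists_ne_map_eq_of_card_lt_of_maps_to
    (by simp) hmaps
  wlog hlt : i < j generalizing i j
  · exact this j hj i hi hij.symm heq.symm (by omega)
  have hfl : ⌊Int.fract ((i:ℝ) * θ) * (M+1)⌋ = ⌊Int.fract ((j:ℝ) * θ) * (M+1)⌋ := by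
    have h1 := hfl0 i; have h2 := hfl0 j
    omega
  -- difference of fracts is small
  have hsmall : |Int.fract ((j:ℝ) * θ) - Int.fract ((i:ℝ) * θ)| < ε := by
    have h1 : |Int.fract ((j:ℝ) * θ) * (M+1) - Int.fract ((i:ℝ) * θ) * (M+1)| < 1 :=
      Int.abs_sub_lt_one_of_floor_eq_floor hfl.symm
    have hM1 : (0:ℝ) < (M:ℝ) + 1 := by positivity
    have h2 : |Int.fract ((j:ℝ) * θ) - Int.fract ((i:ℝ) * θ)| * ((M:ℝ)+1) < 1 := by
      calc |Int.fract ((j:ℝ) * θ) - Int.fract ((i:ℝ) * θ)| * ((M:ℝ)+1)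
          = |(Int.fract ((j:ℝ) * θ) - Int.fract ((i:ℝ) * θ)) * ((M:ℝ)+1)| := by
            rw [abs_mul, abs_of_pos hM1]
        _ = |Int.fract ((j:ℝ) * θ) * ((M:ℝ)+1) - Int.fract ((i:ℝ) * θ) * ((M:ℝ)+1)| := by ring_nf
        _ < 1 := by exact_mod_cast h1
    have h3 : |Int.fract ((j:ℝ) * θ) - Int.fract ((i:ℝ) * θ)| < 1 / ((M:ℝ)+1) :=
      (lt_div_iff₀ hM1).2 h2
    linarith
  refine ⟨j - i, ⌊(j:ℝ) * θ⌋ - ⌊(i:ℝ) * θ⌋, by omega, ?_, ?_⟩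
  · intro h
    have hji : ((j - i : ℕ) : ℝ) * θ = ((⌊(j:ℝ) * θ⌋ - ⌊(i:ℝ) * θ⌋ : ℤ) : ℝ) := by linarith
    have : Irrational (((j - i : ℕ) : ℝ) * θ) := by
      apply hθ.natCast_mul
      omega
    exact this ⟨((⌊(j:ℝ) * θ⌋ - ⌊(i:ℝ) * θ⌋ : ℤ) : ℚ), by push_cast; rw [hji]; push_cast; ring⟩
  · have hcast : ((j - i : ℕ) : ℝ) = (j:ℝ) - (i:ℝ) := by
      push_cast [Nat.cast_sub hlt.le]; ring
    have : ((j - i : ℕ) : ℝ) * θ - ((⌊(j:ℝ) * θ⌋ - ⌊(i:ℝ) * θ⌋ : ℤ) : ℝ)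
        = Int.fract ((j:ℝ) * θ) - Int.fract ((i:ℝ) * θ) := by
      rw [hcast]
      unfold Int.fract
      push_cast
      ring
    rw [this]
    exact hsmall

/-- Multiples of a small nonzero number hit every point modulo 1. -/
lemma aux_steps_hit (g x ε : ℝ) (hg : g ≠ 0) (hε : |g| < ε) :
    ∃ m : ℕ, 1 ≤ m ∧ ∃ M : ℤ, |(m : ℝ) * g - M - x| < ε := by
  rcases hg.lt_or_gt with hneg | hpos
  · -- g < 0 : target t = fract x - 1 ∈ [-1, 0)
    set t : ℝ := Int.fract x - 1 with ht
    have ht0 : t < 0 := by have := Int.fract_lt_one x; linarith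
    have htg : 0 < t / g := div_pos_of_neg_of_neg ht0 hneg
    refine ⟨(⌈t / g⌉).toNat, ?_, -(⌊x⌋ + 1), ?_⟩
    · have : (1:ℤ) ≤ ⌈t / g⌉ := by
        have := Int.ceil_pos.2 htg; omega
      omega
    · have hm : ((⌈t / g⌉).toNat : ℝ) = (⌈t / g⌉ : ℝ) := by
        have : (1:ℤ) ≤ ⌈t / g⌉ := by have := Int.ceil_pos.2 htg; omega
        exact_mod_cast Int.toNat_of_nonneg (by omega)
      rw [hm]
      have h1 : t / g ≤ (⌈t / g⌉ : ℝ) := Int.le_ceil _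
      have h2 : (⌈t / g⌉ : ℝ) < t / g + 1 := Int.ceil_lt_add_one _
      have hgle : (⌈t / g⌉ : ℝ) * g ≤ t := by
        have h3 := mul_le_mul_of_nonpos_right h1 hneg.le
        have h4 : t / g * g = t := div_mul_cancel₀ t (ne_of_lt hneg)
        linarith
      have hggt : t + g < (⌈t / g⌉ : ℝ) * g := by
        have h3 := mul_lt_mul_of_neg_right h2 hneg
        have h4 : (t / g + 1) * g = t + g := by field_simp
        linarith
      have habs : |(⌈t / g⌉ : ℝ) * g - ((-(⌊x⌋ + 1) : ℤ) : ℝ) - x| = |(⌈t / g⌉ : ℝ) * g - t| := by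
        congr 1
        have ht2 : t = x - ⌊x⌋ - 1 := by rw [ht, Int.self_sub_floor]
        rw [ht2]
        push_cast
        ring
      rw [habs, abs_of_nonpos (by linarith)]
      have : -g ≤ |g| := neg_le_abs g
      linarith
  ·
    set t : ℝ := Int.fract x + 1 with ht
    have ht0 : 0 < t := by have := Int.fract_nonneg x; linarith
    have htg : 0 < t / g := div_pos ht0 hpos
    refine ⟨(⌈t / g⌉).toNat, ?_, 1 - ⌊x⌋, ?_⟩
    · have : (1:ℤ) ≤ ⌈t / g⌉ := by have := Int.ceil_pos.2 htg; omega
      omega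
    · have hm : ((⌈t / g⌉).toNat : ℝ) = (⌈t / g⌉ : ℝ) := by
        have : (1:ℤ) ≤ ⌈t / g⌉ := by have := Int.ceil_pos.2 htg; omega
        exact_mod_cast Int.toNat_of_nonneg (by omega)
      rw [hm]
      have h1 : t / g ≤ (⌈t / g⌉ : ℝ) := Int.le_ceil _
      have h2 : (⌈t / g⌉ : ℝ) < t / g + 1 := Int.ceil_lt_add_one _
      have hgle : t ≤ (⌈t / g⌉ : ℝ) * g := by
        have h3 := mul_le_mul_of_nonneg_right h1 hpos.le
        have h4 : t / g * g = t := div_mul_cancel₀ t (ne_of_gt hpos)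
        linarith
      have hggt : (⌈t / g⌉ : ℝ) * g < t + g := by
        have h3 := mul_lt_mul_of_pos_right h2 hpos
        have h4 : (t / g + 1) * g = t + g := by field_simp
        linarith
      have habs : |(⌈t / g⌉ : ℝ) * g - ((1 - ⌊x⌋ : ℤ) : ℝ) - x| = |(⌈t / g⌉ : ℝ) * g - t| := by
        congr 1
        have ht2 : t = x - ⌊x⌋ + 1 := by rw [ht, Int.self_sub_floor]
        rw [ht2]
        push_cast
        ring
      rw [habs, abs_of_nonneg (by linarith)]
      have : g ≤ |g| := le_abs_self g
      linarith

/-- ℕ-orbit of an irrational rotation is dense (real formulation). -/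
lemma aux_dense_nat (θ : ℝ) (hθ : Irrational θ) (x ε : ℝ) (hε : 0 < ε) :
    ∃ (k : ℕ) (N : ℤ), 1 ≤ k ∧ |(k : ℝ) * θ - N - x| < ε := by
  obtain ⟨k₀, N₀, hk₀, hne, hsm⟩ := aux_exists_small θ hθ ε hε
  obtain ⟨m, hm, M, hM⟩ := aux_steps_hit ((k₀:ℝ) * θ - N₀) x ε hne hsm
  refine ⟨m * k₀, m * N₀ + M, Nat.one_le_iff_ne_zero.2 (by positivity), ?_⟩
  have : ((m * k₀ : ℕ) : ℝ) * θ - ((m * N₀ + M : ℤ) : ℝ) - x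
      = (m : ℝ) * ((k₀:ℝ) * θ - N₀) - M - x := by push_cast; ring
  rw [this]
  exact hM

/-- Scaled version: density of `{kθ - NΛ}` with `k ≥ 1`. -/
lemma aux_dense_scaled (θ Λ x ε : ℝ) (hΛ : 0 < Λ) (hirr : Irrational (θ / Λ)) (hε : 0 < ε) :
    ∃ (k : ℕ) (N : ℤ), 1 ≤ k ∧ |(k : ℝ) * θ - N * Λ - x| < ε := by
  obtain ⟨k, N, hk, h⟩ := aux_dense_nat (θ / Λ) hirr (x / Λ) (ε / Λ) (by positivity)
  refine ⟨k, N, hk, ?_⟩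
  have heq : (k : ℝ) * θ - N * Λ - x = ((k : ℝ) * (θ / Λ) - N - x / Λ) * Λ := by
    field_simp
  rw [heq, abs_mul, abs_of_pos hΛ]
  calc |(k : ℝ) * (θ / Λ) - N - x / Λ| * Λ < (ε / Λ) * Λ :=
        mul_lt_mul_of_pos_right h hΛ
  _ = ε := by field_simp


lemma mem_Tstar_pair (a b t : ℝ) :
    t ∈ Tstar {a, b} ↔ t = a ∨ t = b ∨ t = a⁻¹ ∨ t = b⁻¹ ∨ t = 1 := by
  simp [Tstar, Set.image_insert_eq]
  tauto

/-- product over `filter (· ≤ k)` equals product over an initial segment. -/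
lemma prod_filter_le_eq (n : ℕ) (u : ℕ → ℝ) (k : Fin n) :
    (∏ i ∈ Finset.univ.filter (· ≤ k), (fun i : Fin n => u i.val) i)
      = ∏ i ∈ Finset.range (k.val + 1), u i := by
  have himg : (Finset.univ.filter (fun i : Fin n => i ≤ k)).image Fin.val
      = Finset.range (k.val + 1) := by
    ext j
    simp only [Finset.mem_image, Finset.mem_filter, Finset.mem_univ, true_and,
      Finset.mem_range, Nat.lt_succ_iff]
    constructor
    · rintro ⟨i, hik, rfl⟩
      exact hik
    · intro hj
      exact ⟨⟨j, lt_of_le_of_lt hj k.isLt⟩, by simpa [Fin.le_def] using hj, rfl⟩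
  rw [← himg, Finset.prod_image (fun x _ y _ h => Fin.val_injective h)]

/-- Build a `TProd` membership from a walk given by factors `u 0, u 1, ...`. -/
lemma mem_TProd_of_walk (T : Set ℝ) (γm γp : ℝ) (u : ℕ → ℝ) (n : ℕ) (hn : 1 ≤ n)
    (hu : ∀ j < n, u j ∈ Tstar T)
    (hP : ∀ j < n, (∏ i ∈ Finset.range (j + 1), u i) ∈ Icc γm γp) :
    (∏ i ∈ Finset.range n, u i) ∈ TProd T γm γp := by
  refine Set.mem_biUnion (show n ∈ {n : ℕ | 1 ≤ n} from hn) ?_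
  refine ⟨fun i => u i.val, fun i => hu i.val i.isLt, ?_, ?_⟩
  · rw [Fin.prod_univ_eq_prod_range]
  · intro k
    rw [prod_filter_le_eq]
    exact hP k.val k.isLt

lemma irr_ratio (a b : ℝ) (ha : a ∈ Ioo (0:ℝ) 1) (hb : 1 < b)
    (hirr : Irrational (Real.log a / Real.log b)) :
    Irrational ((-Real.log a) / (Real.log b - Real.log a)) := by
  have hla : Real.log a < 0 := Real.log_neg ha.1 ha.2
  have hlb : 0 < Real.log b := Real.log_pos hb
  rintro ⟨r, hr⟩
  have hden : Real.log b - Real.log a ≠ 0 := by linarith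
  have hr' : (r : ℝ) * (Real.log b - Real.log a) = -Real.log a := by
    field_simp at hr
    linarith [hr]
  have hr1 : (r : ℝ) ≠ 1 := by
    intro h1
    rw [h1, one_mul] at hr'
    have : Real.log b = 0 := by linarith
    linarith
  have hrq1 : r ≠ 1 := by exact_mod_cast fun h => hr1 (by exact_mod_cast congrArg Rat.cast h)
  apply hirr
  refine ⟨r / (r - 1), ?_⟩
  have hr1' : (r : ℝ) - 1 ≠ 0 := fun h => hr1 (by linarith)
  push_cast
  rw [div_eq_div_iff hr1' (by positivity : Real.log b ≠ 0)]
  · nlinarith [hr']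

lemma denseInIcc_ab (a b : ℝ) (ha : a ∈ Ioo (0:ℝ) 1) (hb : 1 < b)
    (hirr : Irrational (Real.log a / Real.log b)) : DenseInIcc {a, b} a b := by
  obtain ⟨ha0, ha1⟩ := ha
  have hb0 : (0:ℝ) < b := lt_trans one_pos hb
  have hla : Real.log a < 0 := Real.log_neg ha0 ha1
  have hlb : 0 < Real.log b := Real.log_pos hb
  set Λ : ℝ := Real.log b - Real.log a with hΛdef
  have hΛ : 0 < Λ := by simp only [hΛdef]; linarith
  -- the walk
  set f : ℝ → ℝ := fun x => if x / a ≤ b then x / a else x / b with hfdef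
  set P : ℕ → ℝ := fun j => f^[j] 1 with hPdef
  have hinv : ∀ x ∈ Icc a b, f x ∈ Icc a b := by
    rintro x ⟨hx1, hx2⟩
    have hx0 : 0 < x := lt_of_lt_of_le ha0 hx1
    simp only [hfdef]
    split_ifs with h
    · constructor
      · calc a ≤ x := hx1
          _ ≤ x / a := by
            rw [le_div_iff₀ ha0]
            nlinarith
      · exact h
    · push_neg at h
      have h' : b * a < x := by rwa [lt_div_iff₀ ha0] at h
      constructor
      · rw [le_div_iff₀ hb0]; nlinarith
      · have hxx : x / b ≤ x := by
          rw [div_le_iff₀ hb0]; nlinarith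
        linarith
  have hP0 : P 0 = 1 := by simp [hPdef]
  have hPsucc : ∀ j, P (j + 1) = f (P j) := by
    intro j
    simp only [hPdef]
    exact Function.iterate_succ_apply' f j 1
  have hPmem : ∀ j, P j ∈ Icc a b := by
    intro j
    induction j with
    | zero => rw [hP0]; exact ⟨ha1.le, hb.le⟩
    | succ j ih => rw [hPsucc]; exact hinv _ ih
  have hPpos : ∀ j, 0 < P j := fun j => lt_of_lt_of_le ha0 (hPmem j).1
  have hPlog : ∀ j, ∃ N : ℤ, Real.log (P j) = (j : ℝ) * (-Real.log a) - N * Λ := by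
    intro j
    induction j with
    | zero => exact ⟨0, by simp [hP0]⟩
    | succ j ih =>
      obtain ⟨N, hN⟩ := ih
      rw [hPsucc]
      simp only [hfdef]
      split_ifs with h
      · refine ⟨N, ?_⟩
        rw [Real.log_div (ne_of_gt (hPpos j)) (ne_of_gt ha0), hN]
        push_cast
        ring
      · refine ⟨N + 1, ?_⟩
        rw [Real.log_div (ne_of_gt (hPpos j)) (ne_of_gt hb0), hN]
        simp only [hΛdef]
        push_cast
        ring
  -- factor sequence
  set u : ℕ → ℝ := fun j => if j = 0 then 1 else (if P (j-1) / a ≤ b then a⁻¹ else b⁻¹) with hudef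
  have huprod : ∀ j, (∏ i ∈ Finset.range (j + 1), u i) = P j := by
    intro j
    induction j with
    | zero => simp [hudef, hP0]
    | succ j ih =>
      rw [Finset.prod_range_succ, ih, hPsucc]
      simp only [hudef, hfdef, Nat.succ_ne_zero, if_false, Nat.add_sub_cancel]
      split_ifs with h
      · rw [div_eq_mul_inv]
      · rw [div_eq_mul_inv]
  have hPT : ∀ k : ℕ, P k ∈ TProd {a, b} a b := by
    intro k
    rw [← huprod k]
    apply mem_TProd_of_walk _ _ _ _ (k + 1) (by omega)
    · intro j _
      rw [mem_Tstar_pair]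
      simp only [hudef]
      split_ifs with h1 h2
      · tauto
      · tauto
      · tauto
    · intro j hj
      rw [huprod j]
      exact hPmem j
  -- density on the open interval
  have hab : a < b := lt_trans ha1 hb
  have hIoo : Ioo a b ⊆ closure (TProd {a, b} a b) := by
    intro z hz
    have hz0 : 0 < z := lt_trans ha0 hz.1
    rw [Metric.mem_closure_iff]
    intro ε hε
    have hw1 : Real.log a < Real.log z := Real.log_lt_log ha0 hz.1
    have hw2 : Real.log z < Real.log b := Real.log_lt_log hz0 hz.2
    set w : ℝ := Real.log z with hwdef
    -- continuity of exp at w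
    have hc : ContinuousAt Real.exp w := Real.continuous_exp.continuousAt
    rw [Metric.continuousAt_iff] at hc
    obtain ⟨δ₀, hδ₀, hδ⟩ := hc ε hε
    set δ : ℝ := min δ₀ (min (w - Real.log a) (Real.log b - w)) with hδdef
    have hδpos : 0 < δ := by
      apply lt_min hδ₀
      apply lt_min <;> linarith
    obtain ⟨k, N, hk, hv⟩ := aux_dense_scaled (-Real.log a) Λ w δ hΛ
      (irr_ratio a b ⟨ha0, ha1⟩ hb hirr) hδpos
    obtain ⟨Nk, hNk⟩ := hPlog k
    -- identify N = Nk
    have hlogmem : Real.log (P k) ∈ Icc (Real.log a) (Real.log b) :=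
      ⟨Real.log_le_log ha0 (hPmem k).1, Real.log_le_log (hPpos k) (hPmem k).2⟩
    have habs := abs_lt.1 hv
    have hvla : Real.log a < (k : ℝ) * (-Real.log a) - N * Λ := by
      have h1 : δ ≤ w - Real.log a := le_trans (min_le_right _ _) (min_le_left _ _)
      linarith [habs.1]
    have hvlb : (k : ℝ) * (-Real.log a) - N * Λ < Real.log b := by
      have h1 : δ ≤ Real.log b - w := le_trans (min_le_right _ _) (min_le_right _ _)
      linarith [habs.2]
    have hNeq : N = Nk := by
      have hdiff : ((Nk - N : ℤ) : ℝ) * Λ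
          = ((k : ℝ) * (-Real.log a) - N * Λ) - Real.log (P k) := by
        rw [hNk]; push_cast; ring
      have hbound : |((Nk - N : ℤ) : ℝ) * Λ| < Λ := by
        rw [abs_lt]
        constructor
        · simp only [hΛdef]
          have := hlogmem.2
          nlinarith [hdiff, hvla, hlogmem.2]
        · simp only [hΛdef]
          nlinarith [hdiff, hvlb, hlogmem.1]
      rw [abs_mul, abs_of_pos hΛ] at hbound
      have h1 : |((Nk - N : ℤ) : ℝ)| < 1 := by
        by_contra hcon
        push_neg at hcon
        nlinarith
      have h2 : ((|Nk - N| : ℤ) : ℝ) < 1 := by rw [Int.cast_abs]; exact h1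
      have h3 : |Nk - N| < 1 := by exact_mod_cast h2
      have h4 := abs_lt.mp h3
      omega
    have hlogPk : |Real.log (P k) - w| < δ := by
      rw [hNeq] at hv
      rw [← hNk] at hv
      exact hv
    refine ⟨P k, hPT k, ?_⟩
    have := hδ (show dist (Real.log (P k)) w < δ₀ by rw [Real.dist_eq]; exact lt_of_lt_of_le hlogPk (min_le_left _ _))
    rw [Real.exp_log (hPpos k), Real.exp_log hz0] at this
    rw [dist_comm]
    exact this
  -- conclude on the closed interval
  intro z hz
  rw [← closure_Ioo (ne_of_lt hab)] at hz
  exact closure_minimal hIoo isClosed_closure hz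

lemma lower_bound (a b γm γp : ℝ) (ha : a ∈ Ioo (0:ℝ) 1) (hb : 1 < b)
    (hirr : Irrational (Real.log a / Real.log b)) (hγm : γm ∈ Ioo (0:ℝ) 1) (hγp : 1 < γp)
    (hdense : DenseInIcc {a, b} γm γp) : b / a ≤ γp / γm := by
  by_contra hcon
  push_neg at hcon
  obtain ⟨ha0, ha1⟩ := ha
  obtain ⟨hγm0, hγm1⟩ := hγm
  have hb0 : (0:ℝ) < b := lt_trans one_pos hb
  have hγp0 : (0:ℝ) < γp := lt_trans one_pos hγp
  have hla : Real.log a < 0 := Real.log_neg ha0 ha1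
  have hlb : 0 < Real.log b := Real.log_pos hb
  set α : ℝ := -Real.log a with hαdef
  set Λ : ℝ := Real.log b - Real.log a with hΛdef
  have hΛ : 0 < Λ := by simp only [hΛdef]; linarith
  set c : ℝ := Real.log γm with hcdef
  set d : ℝ := Real.log γp with hddef
  have hc0 : c < 0 := Real.log_neg hγm0 hγm1
  have hd0 : 0 < d := Real.log_pos hγp
  have hL : d - c < Λ := by
    have h1 : Real.log (γp / γm) < Real.log (b / a) :=
      Real.log_lt_log (div_pos hγp0 hγm0) hcon
    rw [Real.log_div (ne_of_gt hγp0) (ne_of_gt hγm0),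
      Real.log_div (ne_of_gt hb0) (ne_of_gt ha0)] at h1
    simp only [hΛdef, hcdef, hddef]
    linarith
  have hirrΛ : Irrational (α / Λ) := irr_ratio a b ⟨ha0, ha1⟩ hb hirr
  clear_value α Λ c d
  -- positive blocker
  obtain ⟨kp, N₀, hkp1, hkpv⟩ := aux_dense_scaled α Λ ((d + (c + Λ)) / 2) ((c + Λ - d) / 2)
    hΛ hirrΛ (by linarith)
  have hkpgap : d < (kp:ℝ) * α - N₀ * Λ ∧ (kp:ℝ) * α - N₀ * Λ < c + Λ := by
    obtain ⟨hv1, hv2⟩ := abs_lt.1 hkpv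
    constructor <;> linarith
  have hkpblock : ∀ N : ℤ, ((kp:ℝ) * α - N * Λ) ∉ Icc c d := by
    intro N hmem
    rcases lt_trichotomy N N₀ with h | h | h
    · have h1 : (1:ℝ) ≤ (N₀:ℝ) - N := by
        have h' : ((N:ℝ)) + 1 ≤ ((N₀:ℝ)) := by exact_mod_cast (by omega : N + 1 ≤ N₀)
        linarith
      have h2 := mul_le_mul_of_nonneg_right h1 hΛ.le
      have := hmem.2
      linarith [hkpgap.1]
    · subst h
      exact absurd hmem.2 (not_le.2 hkpgap.1)
    · have h1 : (1:ℝ) ≤ (N:ℝ) - N₀ := by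
        have h' : ((N₀:ℝ)) + 1 ≤ ((N:ℝ)) := by exact_mod_cast (by omega : N₀ + 1 ≤ N)
        linarith
      have h2 := mul_le_mul_of_nonneg_right h1 hΛ.le
      have := hmem.1
      linarith [hkpgap.2]
  -- negative blocker
  obtain ⟨km, N₁, hkm1, hkmv⟩ := aux_dense_scaled α Λ (((-c) + (-d + Λ)) / 2) ((Λ - (d - c)) / 2)
    hΛ hirrΛ (by linarith)
  have hkmgap : -c < (km:ℝ) * α - N₁ * Λ ∧ (km:ℝ) * α - N₁ * Λ < -d + Λ := by
    obtain ⟨hv1, hv2⟩ := abs_lt.1 hkmv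
    constructor <;> linarith
  have hkmblock : ∀ N : ℤ, (-(km:ℝ) * α - N * Λ) ∉ Icc c d := by
    intro N hmem
    have hmem' : (km:ℝ) * α + N * Λ ∈ Icc (-d) (-c) := by
      constructor <;> [linarith [hmem.2]; linarith [hmem.1]]
    rcases lt_trichotomy (N + N₁) 0 with h | h | h
    · have h1 : (1:ℝ) ≤ -((N:ℝ) + N₁) := by
        have h' : ((N:ℝ)) + ((N₁:ℝ)) ≤ -1 := by exact_mod_cast (by omega : N + N₁ ≤ -1)
        linarith
      have h2 := mul_le_mul_of_nonneg_right h1 hΛ.le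
      have := hmem'.1
      linarith [hkmgap.2]
    · have hNN : (N:ℝ) = -(N₁:ℝ) := by
        have : N = -N₁ := by omega
        exact_mod_cast this
      rw [hNN] at hmem'
      have := hmem'.2
      linarith [hkmgap.1]
    · have h1 : (1:ℝ) ≤ (N:ℝ) + N₁ := by
        have h' : (1:ℝ) ≤ ((N:ℝ)) + ((N₁:ℝ)) := by exact_mod_cast (by omega : 1 ≤ N + N₁)
        linarith
      have h2 := mul_le_mul_of_nonneg_right h1 hΛ.le
      have := hmem'.2
      linarith [hkmgap.1]
  -- every element of TProd has the form m*α - N*Λ with bounded m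
  have hkey : ∀ x ∈ TProd {a, b} γm γp, x ∈ Icc γm γp ∧
      ∃ m N : ℤ, -(km:ℤ) < m ∧ m < (kp:ℤ) ∧ Real.log x = (m:ℝ) * α - N * Λ := by
    intro x hx
    obtain ⟨n, hn, t, hts, hxeq, hpp⟩ := by
      simpa only [TProd, Set.mem_iUnion, Set.mem_setOf_eq, exists_prop, TProdN] using hx
    set u : ℕ → ℝ := fun i => if h : i < n then t ⟨i, h⟩ else 1 with hudef
    have htu : ∀ i : Fin n, t i = u i.val := by
      intro i
      simp only [hudef, i.isLt, dif_pos]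
    set s : ℕ → ℝ := fun j => ∏ i ∈ Finset.range j, u i with hsdef
    have hpartial : ∀ j, 1 ≤ j → j ≤ n → s j ∈ Icc γm γp := by
      intro j hj1 hjn
      have hjlt : j - 1 < n := by omega
      have := hpp ⟨j - 1, hjlt⟩
      have heq : (∏ i ∈ Finset.univ.filter (· ≤ (⟨j - 1, hjlt⟩ : Fin n)), t i) = s j := by
        have h2 : (∏ i ∈ Finset.univ.filter (· ≤ (⟨j - 1, hjlt⟩ : Fin n)),
            (fun i : Fin n => u i.val) i) = ∏ i ∈ Finset.range ((j-1) + 1), u i :=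
          prod_filter_le_eq n u ⟨j - 1, hjlt⟩
        have hj1' : j - 1 + 1 = j := by omega
        simp only [hsdef]
        rw [show (∏ i ∈ Finset.univ.filter (· ≤ (⟨j - 1, hjlt⟩ : Fin n)), t i)
            = ∏ i ∈ Finset.univ.filter (· ≤ (⟨j - 1, hjlt⟩ : Fin n)),
              (fun i : Fin n => u i.val) i from Finset.prod_congr rfl (fun i _ => htu i)]
        rw [h2, hj1']
      rw [← heq]
      exact this
    have hxs : x = s n := by
      rw [hxeq]
      simp only [hsdef]
      rw [← Fin.prod_univ_eq_prod_range u n]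
      exact Finset.prod_congr rfl (fun i _ => htu i)
    have hupos : ∀ j, 0 < u j := by
      intro j
      simp only [hudef]
      split_ifs with h
      · rcases (mem_Tstar_pair a b _).1 (hts ⟨j, h⟩) with h | h | h | h | h <;> rw [h] <;> positivity
      · exact one_pos
    have hspos : ∀ j, 0 < s j := by
      intro j
      simp only [hsdef]
      exact Finset.prod_pos (fun i _ => hupos i)
    have hstep : ∀ j, s (j + 1) = s j * u j := by
      intro j
      simp only [hsdef]
      exact Finset.prod_range_succ u j
    -- the key m-bound finishing step
    have hfin : ∀ j, 1 ≤ j → j ≤ n → ∀ m N : ℤ, -(km:ℤ) ≤ m → m ≤ (kp:ℤ) →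
        Real.log (s j) = (m:ℝ) * α - N * Λ → -(km:ℤ) < m ∧ m < (kp:ℤ) := by
      intro j hj1 hjn m N hm1 hm2 hlog
      have hmem := hpartial j hj1 hjn
      have hlogmem : Real.log (s j) ∈ Icc c d :=
        ⟨by rw [hcdef]; exact Real.log_le_log hγm0 hmem.1,
         by rw [hddef]; exact Real.log_le_log (hspos j) hmem.2⟩
      constructor
      · rcases eq_or_lt_of_le hm1 with h | h
        · exfalso
          apply hkmblock N
          have hm : (m:ℝ) = -(km:ℝ) := by rw [← h]; push_cast; ring
          have heq2 : -(km:ℝ) * α - N * Λ = Real.log (s j) := by rw [hlog, hm]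
          rw [heq2]
          exact hlogmem
        · exact h
      · rcases eq_or_lt_of_le hm2 with h | h
        · exfalso
          apply hkpblock N
          have hm : (m:ℝ) = (kp:ℝ) := by exact_mod_cast h
          have heq2 : (kp:ℝ) * α - N * Λ = Real.log (s j) := by rw [hlog, hm]
          rw [heq2]
          exact hlogmem
        · exact h
    -- main induction
    have hmain : ∀ j, j ≤ n → ∃ m N : ℤ, -(km:ℤ) < m ∧ m < (kp:ℤ) ∧
        Real.log (s j) = (m:ℝ) * α - N * Λ := by
      intro j
      induction j with
      | zero =>
        intro _
        refine ⟨0, 0, by exact_mod_cast Int.neg_neg_of_pos (by exact_mod_cast hkm1), by exact_mod_cast hkp1, ?_⟩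
        simp [hsdef]
      | succ j ih =>
        intro hjn
        obtain ⟨m, N, hm1, hm2, hlog⟩ := ih (by omega)
        have hlog' : Real.log (s (j + 1)) = Real.log (s j) + Real.log (u j) := by
          rw [hstep]
          exact Real.log_mul (ne_of_gt (hspos j)) (ne_of_gt (hupos j))
        have hjln : j < n := by omega
        have hcases : u j = a ∨ u j = b ∨ u j = a⁻¹ ∨ u j = b⁻¹ ∨ u j = 1 := by
          have : u j = t ⟨j, hjln⟩ := by simp only [hudef, hjln, dif_pos]
          rw [this]
          exact (mem_Tstar_pair a b _).1 (hts ⟨j, hjln⟩)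
        -- five cases, each giving (m', N')
        have hex : ∃ m' N' : ℤ, (m - 1 ≤ m' ∧ m' ≤ m + 1) ∧
            Real.log (s (j + 1)) = (m':ℝ) * α - N' * Λ := by
          rcases hcases with h | h | h | h | h
          · refine ⟨m - 1, N, by omega, ?_⟩
            rw [hlog', hlog, h]
            simp only [hαdef]
            push_cast
            ring
          · refine ⟨m - 1, N - 1, by omega, ?_⟩
            rw [hlog', hlog, h]
            simp only [hαdef, hΛdef]
            push_cast
            ring
          · refine ⟨m + 1, N, by omega, ?_⟩
            rw [hlog', hlog, h, Real.log_inv]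
            simp only [hαdef]
            push_cast
            ring
          · refine ⟨m + 1, N + 1, by omega, ?_⟩
            rw [hlog', hlog, h, Real.log_inv]
            simp only [hαdef, hΛdef]
            push_cast
            ring
          · refine ⟨m, N, by omega, ?_⟩
            rw [hlog', hlog, h, Real.log_one]
            ring
        obtain ⟨m', N', hm'b, hlogm'⟩ := hex
        have := hfin (j + 1) (by omega) hjn m' N' (by omega) (by omega) hlogm'
        exact ⟨m', N', this.1, this.2, hlogm'⟩
    obtain ⟨m, N, h1, h2, h3⟩ := hmain n (le_refl n)
    refine ⟨by rw [hxs]; exact hpartial n hn (le_refl n), m, N, h1, h2, by rw [hxs]; exact h3⟩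
  -- finiteness of TProd
  have hsub : TProd {a, b} γm γp ⊆
      ⋃ m ∈ Icc (-(km:ℤ)) (kp:ℤ),
        {x | x ∈ Icc γm γp ∧ ∃ N : ℤ, Real.log x = (m:ℝ) * α - N * Λ} := by
    intro x hx
    obtain ⟨hxmem, m, N, h1, h2, h3⟩ := hkey x hx
    exact Set.mem_biUnion (show m ∈ Icc (-(km:ℤ)) (kp:ℤ) from ⟨h1.le, h2.le⟩) ⟨hxmem, N, h3⟩
  have hsing : ∀ m : ℤ,
      {x | x ∈ Icc γm γp ∧ ∃ N : ℤ, Real.log x = (m:ℝ) * α - N * Λ}.Subsingleton := by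
    intro m x hx y hy
    obtain ⟨hxm, Nx, hNx⟩ := hx
    obtain ⟨hym, Ny, hNy⟩ := hy
    have hx0 : 0 < x := lt_of_lt_of_le hγm0 hxm.1
    have hy0 : 0 < y := lt_of_lt_of_le hγm0 hym.1
    have hlx : Real.log x ∈ Icc c d := ⟨by rw [hcdef]; exact Real.log_le_log hγm0 hxm.1,
      by rw [hddef]; exact Real.log_le_log hx0 hxm.2⟩
    have hly : Real.log y ∈ Icc c d := ⟨by rw [hcdef]; exact Real.log_le_log hγm0 hym.1,
      by rw [hddef]; exact Real.log_le_log hy0 hym.2⟩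
    have hdiff : ((Ny - Nx : ℤ) : ℝ) * Λ = Real.log x - Real.log y := by
      rw [hNx, hNy]; push_cast; ring
    have hbound0 : |Real.log x - Real.log y| < Λ := by
      rw [abs_lt]
      constructor
      · have := hlx.1; have := hly.2; linarith
      · have := hlx.2; have := hly.1; linarith
    have hbound : |((Ny - Nx : ℤ) : ℝ)| * Λ < Λ := by
      calc |((Ny - Nx : ℤ) : ℝ)| * Λ = |((Ny - Nx : ℤ) : ℝ) * Λ| := by
            rw [abs_mul, abs_of_pos hΛ]
      _ = |Real.log x - Real.log y| := by rw [hdiff]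
      _ < Λ := hbound0
    have h1 : |((Ny - Nx : ℤ) : ℝ)| < 1 := by
      by_contra hcon2
      push_neg at hcon2
      nlinarith
    have h2 : ((|Ny - Nx| : ℤ) : ℝ) < 1 := by rw [Int.cast_abs]; exact h1
    have h3 : |Ny - Nx| < 1 := by exact_mod_cast h2
    have h4 := abs_lt.mp h3
    have hNeq : Nx = Ny := by omega
    have hlogeq : Real.log x = Real.log y := by rw [hNx, hNy, hNeq]
    calc x = Real.exp (Real.log x) := (Real.exp_log hx0).symm
    _ = Real.exp (Real.log y) := by rw [hlogeq]
    _ = y := Real.exp_log hy0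
  have hfin : (TProd {a, b} γm γp).Finite := by
    apply Set.Finite.subset _ hsub
    apply Set.Finite.biUnion (Set.finite_Icc _ _)
    intro m _
    exact (hsing m).finite
  -- contradiction with density
  have hclosed : closure (TProd {a, b} γm γp) = TProd {a, b} γm γp :=
    hfin.isClosed.closure_eq
  rw [DenseInIcc, hclosed] at hdense
  exact (Set.Icc_infinite (lt_trans hγm1 hγp)) (hfin.subset hdense)

theorem stmt6 (a b : ℝ) (ha : a ∈ Ioo (0:ℝ) 1) (hb : 1 < b)
    (hirr : Irrational (Real.log a / Real.log b)) :
    limitRatio {a, b} = ENNReal.ofReal (b / a) := by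
  apply le_antisymm
  · apply sInf_le
    exact ⟨a, b, ha, hb, denseInIcc_ab a b ha hb hirr, rfl⟩
  · apply le_sInf
    rintro r ⟨γm, γp, hγm, hγp, hd, rfl⟩
    exact ENNReal.ofReal_le_ofReal (lower_bound a b γm γp ha hb hirr hγm hγp hd)
end
end

section
/- For a nonempty set T ⊆ (0,∞), R_T = 1 if and only if 1 is an accumulation point of T. -/
open Set Filter Topology Pointwise

noncomputable section

lemma card_filter_le_fin {n : ℕ} (k : Fin n) :
    (Finset.univ.filter (· ≤ k)).card = k.1 + 1 := by
  have h : Finset.univ.filter (· ≤ k) = Finset.Iic k := by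
    ext i; simp [Finset.mem_Iic]
  rw [h, Fin.card_Iic]

lemma one_mem_TProd (T : Set ℝ) {γm γp : ℝ} (h1 : γm ≤ 1) (h2 : 1 ≤ γp) :
    (1:ℝ) ∈ TProd T γm γp := by
  refine mem_iUnion₂.2 ⟨1, (by norm_num : (1:ℕ) ∈ {n : ℕ | 1 ≤ n}), fun _ => 1, fun _ => one_mem_Tstar T, by simp, ?_⟩
  intro k
  simpa using ⟨h1, h2⟩

lemma pow_mem_TProd (T : Set ℝ) {γm γp : ℝ} (h1 : γm ≤ 1) (h2 : 1 ≤ γp)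
    {s : ℝ} (hs : s ∈ Tstar T) (k : ℕ)
    (h : ∀ j : ℕ, 1 ≤ j → j ≤ k → s ^ j ∈ Icc γm γp) :
    s ^ k ∈ TProd T γm γp := by
  rcases Nat.eq_zero_or_pos k with hk | hk
  · subst hk; simpa using one_mem_TProd T h1 h2
  refine mem_iUnion₂.2 ⟨k, (by exact hk : k ∈ {n : ℕ | 1 ≤ n}), fun _ => s, fun _ => hs, ?_, ?_⟩
  · rw [Finset.prod_const, Finset.card_univ, Fintype.card_fin]
  · intro j
    rw [Finset.prod_const, card_filter_le_fin]
    exact h (j.1 + 1) (Nat.succ_le_succ (Nat.zero_le _)) (Nat.succ_le_of_lt j.2)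

lemma exists_near_one (T : Set ℝ) (hT0 : T ⊆ Ioi 0) (h : AccPt (1:ℝ) (𝓟 T))
    {θ : ℝ} (hθ : 0 < θ) :
    ∃ t : ℝ, t ∈ Tstar T ∧ t⁻¹ ∈ Tstar T ∧ 1 < t ∧ t - 1 < θ := by
  obtain ⟨t₀, ⟨ht₀b, ht₀T⟩, ht₀ne⟩ := accPt_iff_nhds.1 h
    (Metric.ball 1 (min (1/2) (θ/2))) (Metric.ball_mem_nhds _ (by positivity))
  have ht₀pos : 0 < t₀ := hT0 ht₀T
  rw [Metric.mem_ball, Real.dist_eq] at ht₀b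
  have h1 : |t₀ - 1| < 1/2 := lt_of_lt_of_le ht₀b (min_le_left _ _)
  have h2 : |t₀ - 1| < θ/2 := lt_of_lt_of_le ht₀b (min_le_right _ _)
  have h1' := abs_lt.1 h1
  have h2' := abs_lt.1 h2
  rcases lt_or_gt_of_ne ht₀ne with hlt | hgt
  · refine ⟨t₀⁻¹, Or.inl (Or.inr ⟨t₀, ht₀T, rfl⟩), ?_, ?_, ?_⟩
    · rw [inv_inv]; exact Or.inl (Or.inl ht₀T)
    · exact (one_lt_inv₀ ht₀pos).2 hlt
    · have hinv : t₀⁻¹ < 1 + θ := by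
        rw [inv_eq_one_div, div_lt_iff₀ ht₀pos]
        nlinarith [h1'.1, h2'.1]
      linarith
  · refine ⟨t₀, Or.inl (Or.inl ht₀T), Or.inl (Or.inr ⟨t₀, ht₀T, rfl⟩), hgt, ?_⟩
    linarith [h2'.2]

lemma denseInIcc_of_accPt (T : Set ℝ) (hT0 : T ⊆ Ioi 0) (h : AccPt (1:ℝ) (𝓟 T))
    {γm γp : ℝ} (hm : γm ∈ Ioo (0:ℝ) 1) (hp : 1 < γp) : DenseInIcc T γm γp := by
  intro y hy
  rw [Metric.mem_closure_iff]
  intro δ hδ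
  have hγp0 : 0 < γp := lt_trans one_pos hp
  obtain ⟨t, htT, htiT, ht1, htδ⟩ := exists_near_one T hT0 h (θ := δ / γp) (by positivity)
  have htpos : 0 < t := lt_trans one_pos ht1
  have hδγ : δ / γp ≤ δ := by
    rw [div_le_iff₀ hγp0]; nlinarith
  rcases le_or_gt 1 y with hy1 | hy1
  · obtain ⟨k, hk1, hk2⟩ := exists_nat_pow_near hy1 ht1
    have htk0 : 0 < t ^ k := pow_pos htpos k
    refine ⟨t ^ k, ?_, ?_⟩
    · apply pow_mem_TProd T hm.2.le hp.le htT
      intro j _ hjk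
      constructor
      · exact le_trans hm.2.le (one_le_pow₀ ht1.le)
      · exact le_trans (le_trans (pow_le_pow_right₀ ht1.le hjk) hk1) hy.2
    · rw [Real.dist_eq, abs_of_nonneg (sub_nonneg.2 hk1)]
      have hk2' : y < t ^ k * t := by rw [← pow_succ]; exact hk2
      have htkγ : t ^ k ≤ γp := le_trans hk1 hy.2
      have h3 : t ^ k * t - t ^ k ≤ γp * (t - 1) := by
        nlinarith [mul_nonneg (sub_nonneg.2 htkγ) (sub_nonneg.2 ht1.le)]
      have hc : γp * (δ / γp) = δ := by field_simp
      have h4 : γp * (t - 1) < δ := by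
        rw [← hc]; exact mul_lt_mul_of_pos_left htδ hγp0
      linarith
  · have hypos : 0 < y := lt_of_lt_of_le hm.1 hy.1
    have hs1 : t⁻¹ < 1 := inv_lt_one_of_one_lt₀ ht1
    have hs0 : 0 < t⁻¹ := inv_pos.2 htpos
    obtain ⟨k, hk1, hk2⟩ := exists_nat_pow_near_of_lt_one hypos hy1.le hs0 hs1
    have hsk1 : t⁻¹ ^ k ≤ 1 := pow_le_one₀ hs0.le hs1.le
    refine ⟨t⁻¹ ^ k, ?_, ?_⟩
    · apply pow_mem_TProd T hm.2.le hp.le htiT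
      intro j _ hjk
      constructor
      · exact le_trans hy.1 (le_trans hk2 (pow_le_pow_of_le_one hs0.le hs1.le hjk))
      · exact le_trans (pow_le_one₀ hs0.le hs1.le) hp.le
    · rw [Real.dist_eq, abs_sub_comm, abs_of_nonneg (sub_nonneg.2 hk2)]
      have hk1' : t⁻¹ ^ k * t⁻¹ < y := by rw [← pow_succ]; exact hk1
      have hsk0 : 0 < t⁻¹ ^ k := pow_pos hs0 k
      -- 1 - t⁻¹ < t - 1
      have hcross : 1 - t⁻¹ < t - 1 := by
        have htt : t * t⁻¹ = 1 := mul_inv_cancel₀ htpos.ne'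
        nlinarith [mul_pos (sub_pos.2 ht1) (sub_pos.2 ht1)]
      have hchain : t⁻¹ ^ k - t⁻¹ ^ k * t⁻¹ ≤ 1 - t⁻¹ := by
        nlinarith [mul_nonneg (sub_nonneg.2 hsk1) (sub_nonneg.2 hs1.le)]
      linarith

lemma tprod_subset_one (T : Set ℝ) (hT0 : T ⊆ Ioi 0) {ε γm γp : ℝ} (hε : 0 < ε)
    (hsep : ∀ t ∈ T, t ≠ 1 → ε ≤ |t - 1|)
    (hm : γm ∈ Ioo (0:ℝ) 1) (hp : 1 < γp) (hr : γp < (1 + ε) * γm) :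
    TProd T γm γp ⊆ {1} := by
  have hε1 : (0:ℝ) < 1 + ε := by linarith
  -- trichotomy for elements of Tstar
  have htri : ∀ s ∈ Tstar T, s = 1 ∨ 1 + ε ≤ s ∨ s ≤ 1 / (1 + ε) := by
    rintro s (⟨hs | ⟨u, huT, rfl⟩⟩ | hs1)
    · by_cases h1 : s = 1
      · exact Or.inl h1
      · rcases le_abs.1 (hsep s hs h1) with h | h
        · exact Or.inr (Or.inl (by linarith))
        · refine Or.inr (Or.inr ?_)
          rw [le_div_iff₀ hε1]
          nlinarith
    · have hupos : 0 < u := hT0 huT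
      simp only
      by_cases h1 : u = 1
      · subst h1; exact Or.inl (by norm_num)
      · rcases le_abs.1 (hsep u huT h1) with h | h
        · refine Or.inr (Or.inr ?_)
          rw [div_eq_mul_inv, one_mul]
          exact inv_anti₀ hε1 (by linarith)
        · refine Or.inr (Or.inl ?_)
          rw [← one_div, le_div_iff₀ hupos]
          nlinarith
    · exact Or.inl hs1
  have hγpε : γp < 1 + ε := by nlinarith [hm.2]
  have hγmε : 1 / (1 + ε) < γm := by
    rw [div_lt_iff₀ hε1]; nlinarith
  rintro x hx
  obtain ⟨n, hn, t, hts, hxe, hpartial⟩ := mem_iUnion₂.1 hx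
  have key : ∀ m : ℕ, ∀ hmn : m < n, t ⟨m, hmn⟩ = 1 := by
    intro m
    induction m using Nat.strong_induction_on with
    | _ m IH =>
      intro hmn
      have hpp := hpartial ⟨m, hmn⟩
      have hone : (∏ i ∈ Finset.univ.filter (· ≤ (⟨m, hmn⟩ : Fin n)), t i) = t ⟨m, hmn⟩ := by
        apply Finset.prod_eq_single_of_mem
        · simp
        · intro j hj hne
          have hjle : j ≤ (⟨m, hmn⟩ : Fin n) := (Finset.mem_filter.1 hj).2
          have hjlt : j.1 < m := Fin.lt_def.1 (lt_of_le_of_ne hjle hne)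
          have := IH j.1 hjlt j.2
          simpa using this
      rw [hone] at hpp
      rcases htri _ (hts ⟨m, hmn⟩) with h1 | h2 | h3
      · exact h1
      · exact absurd hpp.2 (by linarith)
      · exact absurd hpp.1 (by linarith)
  have : x = 1 := by
    rw [hxe]
    apply Finset.prod_eq_one
    intro i _
    have := key i.1 i.2
    simpa using this
  exact this

theorem stmt7 (T : Set ℝ) (hT : T.Nonempty) (hT0 : T ⊆ Ioi 0) :
    limitRatio T = 1 ↔ AccPt (1:ℝ) (Filter.principal T) := by
  constructor
  · intro hR
    by_contra hacc
    rw [accPt_iff_nhds] at hacc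
    push_neg at hacc
    obtain ⟨U, hU, hU2⟩ := hacc
    obtain ⟨δ, hδ0, hball⟩ := Metric.mem_nhds_iff.1 hU
    set ε : ℝ := min δ (1/2) with hεdef
    have hε0 : 0 < ε := lt_min hδ0 (by norm_num)
    have hsep : ∀ t ∈ T, t ≠ 1 → ε ≤ |t - 1| := by
      intro t htT hne
      by_contra hlt
      push_neg at hlt
      have : t ∈ Metric.ball (1:ℝ) δ := by
        rw [Metric.mem_ball, Real.dist_eq]
        exact lt_of_lt_of_le hlt (min_le_left _ _)
      exact hne (hU2 t ⟨hball this, htT⟩)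
    have hlow : ENNReal.ofReal (1 + ε) ≤ limitRatio T := by
      apply le_sInf
      rintro r ⟨γm, γp, hm, hp, hdense, rfl⟩
      rw [ENNReal.ofReal_le_ofReal_iff (div_nonneg (by linarith) hm.1.le)]
      by_contra hcon
      push_neg at hcon
      have hr : γp < (1 + ε) * γm := by
        rw [div_lt_iff₀ hm.1] at hcon
        linarith
      have hsub := tprod_subset_one T hT0 hε0 hsep hm hp hr
      have hcl : closure (TProd T γm γp) ⊆ {1} := by
        have := closure_mono hsub
        simpa using this
      have : γm ∈ closure (TProd T γm γp) :=
        hdense ⟨le_refl _, by linarith [hm.2]⟩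
      have : γm = 1 := hcl this
      linarith [hm.2]
    rw [hR] at hlow
    have h1ε : (1:ENNReal) < ENNReal.ofReal (1 + ε) := ENNReal.one_lt_ofReal.2 (by linarith)
    exact absurd hlow (not_le.2 h1ε)
  · intro hacc
    apply le_antisymm
    · apply ENNReal.le_of_forall_pos_le_add
      intro ε hε _
      set e : ℝ := min ((ε:ℝ)/3) 1 with hedef
      have hε0 : (0:ℝ) < ε := hε
      have he0 : 0 < e := lt_min (by positivity) one_pos
      have he1 : e ≤ 1 := min_le_right _ _
      have heε : e ≤ (ε:ℝ)/3 := min_le_left _ _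
      have h1e : 1 < 1 + e := by linarith
      have hmem : ENNReal.ofReal ((1+e) * (1+e)) ∈
          {r : ENNReal | ∃ γm γp : ℝ, γm ∈ Ioo (0:ℝ) 1 ∧ 1 < γp ∧ DenseInIcc T γm γp ∧
            r = ENNReal.ofReal (γp / γm)} := by
        refine ⟨(1+e)⁻¹, 1+e, ⟨by positivity, inv_lt_one_of_one_lt₀ h1e⟩, h1e, ?_, ?_⟩
        · exact denseInIcc_of_accPt T hT0 hacc ⟨by positivity, inv_lt_one_of_one_lt₀ h1e⟩ h1e
        · rw [div_eq_mul_inv, inv_inv]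
      have hle : limitRatio T ≤ ENNReal.ofReal ((1+e) * (1+e)) := sInf_le hmem
      have hbound : ((1:ℝ)+e) * (1+e) ≤ 1 + (ε:ℝ) := by nlinarith
      calc limitRatio T ≤ ENNReal.ofReal ((1+e) * (1+e)) := hle
        _ ≤ ENNReal.ofReal (1 + (ε:ℝ)) := ENNReal.ofReal_le_ofReal hbound
        _ = 1 + (ε : ENNReal) := by
            rw [ENNReal.ofReal_add (by norm_num) (by positivity)]
            simp [ENNReal.ofReal_coe_nnreal]
    · apply le_sInf
      rintro r ⟨γm, γp, hm, hp, _, rfl⟩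
      rw [ENNReal.one_le_ofReal]
      rw [le_div_iff₀ hm.1]
      nlinarith [hm.2]
end
end

section
/- If 1 is an accumulation point of a set T ⊆ (0,∞), then for all γ₋ ∈ (0,1) and γ₊ ∈ (1,∞) the set T_{γ₋,γ₊} is dense in [γ₋,γ₊]. -/
open Set Filter Topology Pointwise

noncomputable section

lemma const_mem (T : Set ℝ) (γm γp c : ℝ) (hc : c ∈ Tstar T) (n : ℕ) (hn : 1 ≤ n)
    (h : ∀ j : ℕ, j < n → c ^ (j + 1) ∈ Icc γm γp) : c ^ n ∈ TProd T γm γp := by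
  refine Set.mem_biUnion hn ⟨fun _ => c, fun _ => hc, ?_, ?_⟩
  · simp
  · intro k
    have he : (Finset.univ.filter (· ≤ k)) = Finset.Iic k := by ext j; simp
    rw [he, Finset.prod_const, Fin.card_Iic]
    exact h k k.isLt

lemma exists_s (T : Set ℝ) (hT0 : T ⊆ Ioi 0) (hacc : AccPt (1:ℝ) (Filter.principal T))
    (e : ℝ) (he : 0 < e) :
    ∃ s : ℝ, 1 < s ∧ s - 1 < e ∧ s ∈ Tstar T ∧ s⁻¹ ∈ Tstar T := by
  set δ : ℝ := min (e / 2) (1 / 2) with hδdef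
  have hδ0 : 0 < δ := lt_min (by linarith) (by norm_num)
  have hδe : 2 * δ ≤ e := by
    have := min_le_left (e / 2) (1 / 2); linarith
  have hδh : δ ≤ 1 / 2 := min_le_right _ _
  obtain ⟨t, ⟨htb, htT⟩, htne⟩ :=
    accPt_iff_nhds.mp hacc (Metric.ball 1 δ) (Metric.ball_mem_nhds _ hδ0)
  have ht0 : 0 < t := hT0 htT
  have htd : |t - 1| < δ := by simpa [Real.dist_eq] using htb
  have htd' : 1 - δ < t ∧ t < 1 + δ := abs_lt.mp htd |>.imp (by intro h; linarith) (by intro h; linarith)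
  rcases lt_or_gt_of_ne htne with hlt | hgt
  · refine ⟨t⁻¹, (one_lt_inv₀ ht0).mpr hlt, ?_, ?_, ?_⟩
    · have h2 : (1:ℝ)/2 < t := by linarith [htd'.1]
      have : t⁻¹ < 2 := by
        rw [inv_lt_comm₀ (by linarith) (by norm_num)]; linarith
      have h3 : t⁻¹ - 1 = (1 - t) / t := by field_simp
      rw [h3, div_lt_iff₀ ht0]
      nlinarith [htd'.1]
    · exact Or.inl (Or.inr ⟨t, htT, rfl⟩)
    · rw [inv_inv]; exact Or.inl (Or.inl htT)
  · refine ⟨t, hgt, by linarith [htd'.2], Or.inl (Or.inl htT), Or.inl (Or.inr ⟨t, htT, rfl⟩)⟩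

theorem stmt8' (T : Set ℝ) (hT0 : T ⊆ Ioi 0) (hacc : AccPt (1:ℝ) (Filter.principal T)) :
    ∀ γm γp : ℝ, γm ∈ Ioo (0:ℝ) 1 → 1 < γp → Icc γm γp ⊆ closure (TProd T γm γp) := by
  intro γm γp hγm hγp x hx
  rw [Metric.mem_closure_iff]
  intro ε hε
  have hγp0 : (0:ℝ) < γp := by linarith
  obtain ⟨s, hs1, hse, hsT, hsiT⟩ := exists_s T hT0 hacc (ε / γp) (div_pos hε hγp0)
  have hs0 : (0:ℝ) < s := by linarith
  have hεs : γp * (s - 1) < ε := by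
    have := (lt_div_iff₀ hγp0).mp hse; linarith
  have hsε : s - 1 < ε := by nlinarith
  rcases le_or_gt s x with hxs | hxs
  · -- x ≥ s : use powers of s
    have hK : ∃ n, x < s ^ n := pow_unbounded_of_one_lt x hs1
    set K := Nat.find hK with hKdef
    have hKs : x < s ^ K := Nat.find_spec hK
    have hK2 : 2 ≤ K := by
      rw [show (2:ℕ) = 1 + 1 from rfl, ← Nat.lt_iff_add_one_le, hKdef, Nat.lt_find_iff]
      intro m hm
      interval_cases m <;> simp <;> linarith
    set k := K - 1 with hkdef
    have hkK : k + 1 = K := by omega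
    have hk1 : 1 ≤ k := by omega
    have hks : s ^ k ≤ x := not_lt.mp (Nat.find_min hK (by omega))
    have hxlt : x < s ^ k * s := by rw [← pow_succ]; rw [hkK]; exact hKs
    refine ⟨s ^ k, const_mem T γm γp s hsT k hk1 ?_, ?_⟩
    · intro j hj
      constructor
      · have : (1:ℝ) ≤ s ^ (j+1) := one_le_pow₀ hs1.le
        linarith [hγm.2]
      · calc s ^ (j+1) ≤ s ^ k := pow_le_pow_right₀ hs1.le (by omega)
          _ ≤ x := hks
          _ ≤ γp := hx.2
    · have hsk0 : (0:ℝ) < s ^ k := pow_pos hs0 k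
      rw [Real.dist_eq, abs_of_nonneg (by linarith)]
      nlinarith [hx.2]
  · rcases le_or_gt x s⁻¹ with hxsi | hxsi
    · -- x ≤ s⁻¹ : use powers of s⁻¹
      have hsi1 : s⁻¹ < 1 := inv_lt_one_of_one_lt₀ hs1
      have hsi0 : (0:ℝ) < s⁻¹ := inv_pos.mpr hs0
      have hx0 : (0:ℝ) < x := lt_of_lt_of_le hγm.1 hx.1
      have hK : ∃ n, s⁻¹ ^ n < x := exists_pow_lt_of_lt_one hx0 hsi1
      set K := Nat.find hK with hKdef
      have hKs : s⁻¹ ^ K < x := Nat.find_spec hK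
      have hK2 : 2 ≤ K := by
        rw [show (2:ℕ) = 1 + 1 from rfl, ← Nat.lt_iff_add_one_le, hKdef, Nat.lt_find_iff]
        intro m hm
        interval_cases m <;> simp <;> linarith
      set k := K - 1 with hkdef
      have hkK : k + 1 = K := by omega
      have hk1 : 1 ≤ k := by omega
      have hks : x ≤ s⁻¹ ^ k := not_lt.mp (Nat.find_min hK (by omega))
      have hxlt : s⁻¹ ^ k * s⁻¹ < x := by rw [← pow_succ, hkK]; exact hKs
      refine ⟨s⁻¹ ^ k, const_mem T γm γp s⁻¹ hsiT k hk1 ?_, ?_⟩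
      · intro j hj
        constructor
        · calc γm ≤ x := hx.1
            _ ≤ s⁻¹ ^ k := hks
            _ ≤ s⁻¹ ^ (j+1) := pow_le_pow_of_le_one hsi0.le hsi1.le (by omega)
        · have : s⁻¹ ^ (j+1) ≤ 1 := pow_le_one₀ hsi0.le hsi1.le
          linarith
      · have hsk1 : s⁻¹ ^ k ≤ 1 := pow_le_one₀ hsi0.le hsi1.le
        have hsk0 : (0:ℝ) < s⁻¹ ^ k := pow_pos hsi0 k
        have hss : s * s⁻¹ = 1 := mul_inv_cancel₀ (ne_of_gt hs0)
        rw [Real.dist_eq, abs_of_nonpos (by linarith)]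
        nlinarith [sq_nonneg (s - 1), mul_pos hsk0 hsi0]
    · -- s⁻¹ < x < s : use 1
      have h1 : (1:ℝ) ∈ TProd T γm γp := by
        have := const_mem T γm γp 1 (Or.inr rfl) 1 le_rfl
          (by intro j hj; simp; exact ⟨hγm.2.le, hγp.le⟩)
        simpa using this
      refine ⟨1, h1, ?_⟩
      rw [Real.dist_eq, abs_lt]
      have hss : s * s⁻¹ = 1 := mul_inv_cancel₀ (ne_of_gt hs0)
      constructor
      · nlinarith [sq_nonneg (s-1)]
      · linarith

theorem stmt8 (T : Set ℝ) (hT0 : T ⊆ Ioi 0) (hacc : AccPt (1:ℝ) (Filter.principal T)) :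
    ∀ γm γp : ℝ, γm ∈ Ioo (0:ℝ) 1 → 1 < γp → DenseInIcc T γm γp := fun γm γp hγm hγp => stmt8' T hT0 hacc γm γp hγm hγp
end
end

section
/- Let c ∈ (1,∞) and T = { c·2^{1/k} : k ∈ ℕ, k ≥ 1 }. Then R_T = c². In particular, for every γ₊ ∈ (c,c²), (γ₊/c, c) ∩ T_{1,γ₊} = ∅, so T_{1,γ₊} is not dense in [1,γ₊]. -/
open Set Filter Topology Pointwise

noncomputable section

lemma mem_Tstar_iff {T : Set ℝ} {τ : ℝ} :
    τ ∈ Tstar T ↔ τ ∈ T ∨ (∃ t ∈ T, τ = t⁻¹) ∨ τ = 1 := by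
  simp only [Tstar, Set.mem_union, Set.mem_image, Set.mem_singleton_iff]
  constructor
  · rintro ((h | ⟨t, ht, rfl⟩) | h)
    · exact Or.inl h
    · exact Or.inr (Or.inl ⟨t, ht, rfl⟩)
    · exact Or.inr (Or.inr h)
  · rintro (h | ⟨t, ht, rfl⟩ | h)
    · exact Or.inl (Or.inl h)
    · exact Or.inl (Or.inr ⟨t, ht, rfl⟩)
    · exact Or.inr h

lemma TProd_induction {T : Set ℝ} {γm γp : ℝ} (C : Set ℝ)
    (H1 : ∀ τ, τ ∈ Tstar T → τ ∈ Icc γm γp → τ ∈ C)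
    (H2 : ∀ p τ, p ∈ C → p ∈ Icc γm γp → τ ∈ Tstar T → p * τ ∈ Icc γm γp → p * τ ∈ C) :
    TProd T γm γp ⊆ C := by
  intro x hx
  simp only [TProd, Set.mem_iUnion, Set.mem_setOf_eq] at hx
  obtain ⟨n, hn, t, ht, hx, hpp⟩ := hx
  have key : ∀ j (hj : j < n),
      (∏ i ∈ Finset.univ.filter (· ≤ (⟨j, hj⟩ : Fin n)), t i) ∈ C := by
    intro j
    induction j with
    | zero =>
      intro hj
      have h0 : Finset.univ.filter (· ≤ (⟨0, hj⟩ : Fin n)) = {(⟨0, hj⟩ : Fin n)} := by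
        ext i; simp [Fin.le_def, Fin.ext_iff]
      rw [h0, Finset.prod_singleton]
      exact H1 _ (ht _) (by have := hpp ⟨0, hj⟩; rwa [h0, Finset.prod_singleton] at this)
    | succ j ih =>
      intro hj
      have hj' : j < n := Nat.lt_of_succ_lt hj
      have hstep : Finset.univ.filter (· ≤ (⟨j + 1, hj⟩ : Fin n)) =
          insert (⟨j + 1, hj⟩ : Fin n) (Finset.univ.filter (· ≤ (⟨j, hj'⟩ : Fin n))) := by
        ext i; simp [Fin.le_def, Fin.ext_iff]; omega
      have hnm : (⟨j + 1, hj⟩ : Fin n) ∉ Finset.univ.filter (· ≤ (⟨j, hj'⟩ : Fin n)) := by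
        simp [Fin.le_def]
      rw [hstep, Finset.prod_insert hnm, mul_comm]
      refine H2 _ _ (ih hj') (hpp _) (ht _) ?_
      have := hpp ⟨j + 1, hj⟩
      rwa [hstep, Finset.prod_insert hnm, mul_comm] at this
  have hlast : n - 1 < n := by omega
  have huniv : Finset.univ.filter (· ≤ (⟨n - 1, hlast⟩ : Fin n)) = Finset.univ := by
    ext i; simp [Fin.le_def]; omega
  have := key (n - 1) hlast
  rwa [huniv, ← hx] at this

lemma TProd_subset_Icc {T : Set ℝ} {γm γp : ℝ} : TProd T γm γp ⊆ Icc γm γp :=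
  TProd_induction (Icc γm γp) (fun _ _ h => h) (fun _ _ _ _ _ h => h)

lemma mem_TProd_base {T : Set ℝ} {γm γp τ : ℝ} (hτ : τ ∈ Tstar T)
    (h : τ ∈ Icc γm γp) : τ ∈ TProd T γm γp := by
  simp only [TProd, Set.mem_iUnion, Set.mem_setOf_eq]
  refine ⟨1, le_refl 1, fun _ => τ, fun _ => hτ, by simp, ?_⟩
  intro k
  have : Finset.univ.filter (· ≤ k) = ({k} : Finset (Fin 1)) := by
    ext i; simp [Fin.le_def, Fin.ext_iff]
  rw [this, Finset.prod_singleton]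
  exact h

lemma mem_TProd_mul {T : Set ℝ} {γm γp p τ : ℝ} (hp : p ∈ TProd T γm γp)
    (hτ : τ ∈ Tstar T) (h : p * τ ∈ Icc γm γp) : p * τ ∈ TProd T γm γp := by
  simp only [TProd, Set.mem_iUnion, Set.mem_setOf_eq] at hp ⊢
  obtain ⟨n, hn, t, ht, hx, hpp⟩ := hp
  refine ⟨n + 1, by omega, Fin.snoc t τ, ?_, ?_, ?_⟩
  · intro i
    refine Fin.lastCases ?_ ?_ i
    · rw [Fin.snoc_last]; exact hτ
    · intro i; rw [Fin.snoc_castSucc]; exact ht i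
  · rw [Fin.prod_snoc, ← hx]
  · intro k
    refine Fin.lastCases ?_ ?_ k
    · have : Finset.univ.filter (· ≤ Fin.last n) = Finset.univ := by
        ext i; simp [Fin.le_last]
      rw [this, Fin.prod_snoc, ← hx]
      exact h
    · intro k
      have heq : (∏ i ∈ Finset.univ.filter (· ≤ Fin.castSucc k), Fin.snoc t τ i)
          = ∏ i ∈ Finset.univ.filter (· ≤ k), t i := by
        refine Finset.prod_bij' (fun i hi => ⟨i.1, ?_⟩) (fun i _ => Fin.castSucc i)
          ?_ ?_ ?_ ?_ ?_
        · have hi' : i ≤ Fin.castSucc k := by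
            simpa using hi
          exact lt_of_le_of_lt (by exact_mod_cast hi') k.2
        · intro a ha
          simp only [Finset.mem_filter, Finset.mem_univ, true_and] at ha ⊢
          rw [Fin.le_def] at ha ⊢
          exact_mod_cast ha
        · intro a ha
          simp only [Finset.mem_filter, Finset.mem_univ, true_and] at ha ⊢
          rw [Fin.le_def] at ha ⊢
          exact_mod_cast ha
        · intro a ha; simp [Fin.ext_iff]
        · intro a ha; simp [Fin.ext_iff]
        · intro a ha
          simp only [Finset.mem_filter, Finset.mem_univ, true_and] at ha
          rcases a with ⟨av, hav⟩
          have hlt : av < n := lt_of_le_of_lt (by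
            rw [Fin.le_def] at ha; exact_mod_cast ha) k.2
          exact @Fin.snoc_castSucc n (fun _ => ℝ) τ t ⟨av, hlt⟩
      rw [heq]
      exact hpp k

/-- The specific set `T` for parameter `c`. -/
def Tc (c : ℝ) : Set ℝ := {x : ℝ | ∃ k : ℕ, 1 ≤ k ∧ x = c * (2:ℝ) ^ ((1:ℝ)/k)}

lemma two_rpow_pos (s : ℝ) : 0 < (2:ℝ) ^ s := Real.rpow_pos_of_pos two_pos s

lemma Tc_bounds {c : ℝ} (hc : 1 < c) {τ : ℝ} (hτ : τ ∈ Tc c) : c < τ ∧ τ ≤ 2 * c := by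
  obtain ⟨k, hk, rfl⟩ := hτ
  have hc0 : (0:ℝ) < c := lt_trans one_pos hc
  have hk0 : (0:ℝ) < (k:ℝ) := by exact_mod_cast hk
  have h1 : (1:ℝ) < (2:ℝ) ^ ((1:ℝ)/k) := by
    have := Real.rpow_lt_rpow_of_exponent_lt one_lt_two (show (0:ℝ) < 1/k by positivity)
    simpa using this
  have h2 : (2:ℝ) ^ ((1:ℝ)/k) ≤ 2 := by
    have hle : (1:ℝ)/k ≤ 1 := by
      rw [div_le_one hk0]; exact_mod_cast hk
    have := Real.rpow_le_rpow_of_exponent_le one_le_two hle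
    simpa using this
  constructor
  · nlinarith
  · nlinarith

lemma gap_invariant {c γm γp : ℝ} (hc : 1 < c) (hγm0 : 0 < γm) (hγm1 : γm ≤ 1)
    (hγp : 1 ≤ γp) :
    ∀ x ∈ TProd (Tc c) γm γp, x ≤ γp / c ∨ x = 1 ∨ γm * c ≤ x := by
  have hc0 : (0:ℝ) < c := lt_trans one_pos hc
  refine TProd_induction {x : ℝ | x ≤ γp / c ∨ x = 1 ∨ γm * c ≤ x} ?_ ?_
  · intro τ hτ hIcc
    rcases mem_Tstar_iff.mp hτ with h | ⟨t, ht, rfl⟩ | h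
    · obtain ⟨h1, _⟩ := Tc_bounds hc h
      right; right; nlinarith
    · obtain ⟨h1, _⟩ := Tc_bounds hc ht
      left
      have : t⁻¹ ≤ c⁻¹ := by
        apply inv_anti₀ hc0 (le_of_lt h1)
      calc t⁻¹ ≤ c⁻¹ := this
        _ ≤ γp / c := by rw [inv_eq_one_div]; gcongr
    · right; left; exact h
  · intro p τ hpC hpIcc hτ hIcc
    obtain ⟨hp1, hp2⟩ := hpIcc
    have hp0 : 0 < p := lt_of_lt_of_le hγm0 hp1
    rcases mem_Tstar_iff.mp hτ with h | ⟨t, ht, rfl⟩ | h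
    · obtain ⟨h1, _⟩ := Tc_bounds hc h
      right; right; nlinarith
    · obtain ⟨h1, _⟩ := Tc_bounds hc ht
      have ht0 : (0:ℝ) < t := lt_trans hc0 h1
      left
      have : t⁻¹ ≤ c⁻¹ := inv_anti₀ hc0 (le_of_lt h1)
      calc p * t⁻¹ ≤ γp * c⁻¹ := by
            apply mul_le_mul hp2 this (by positivity) (by linarith)
        _ = γp / c := by rw [div_eq_mul_inv]
    · rw [h, mul_one]; exact hpC

lemma not_dense_of_ratio_lt {c γm γp : ℝ} (hc : 1 < c) (hγm0 : 0 < γm) (hγm1 : γm ≤ 1)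
    (hγp : 1 ≤ γp) (hmp : γm < γp) (hr : γp < γm * c ^ 2) :
    ¬ DenseInIcc (Tc c) γm γp := by
  have hc0 : (0:ℝ) < c := lt_trans one_pos hc
  intro hd
  set a := max γm (γp / c) with ha_def
  set b := min γp (γm * c) with hb_def
  have hab : a < b := by
    rw [ha_def, hb_def, max_lt_iff, lt_min_iff, lt_min_iff]
    refine ⟨⟨hmp, by nlinarith⟩, ⟨by rw [div_lt_iff₀ hc0]; nlinarith, ?_⟩⟩
    rw [div_lt_iff₀ hc0]; nlinarith
  have hga : γm ≤ a := le_max_left _ _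
  have hbp : b ≤ γp := min_le_left _ _
  have key : ∀ U : Set ℝ, IsOpen U → U ⊆ Ioo a b → (1:ℝ) ∉ U → ∀ x ∈ U, False := by
    intro U hU hUsub h1U x hxU
    have hx : x ∈ Icc γm γp := by
      obtain ⟨hx1, hx2⟩ := hUsub hxU
      exact ⟨le_of_lt (lt_of_le_of_lt hga hx1), le_of_lt (lt_of_lt_of_le hx2 hbp)⟩
    have hxc : x ∈ closure (TProd (Tc c) γm γp) := hd hx
    rw [mem_closure_iff] at hxc
    obtain ⟨y, hyU, hyT⟩ := hxc U hU hxU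
    obtain ⟨hy1, hy2⟩ := hUsub hyU
    rcases gap_invariant hc hγm0 hγm1 hγp y hyT with h | h | h
    · have : γp / c ≤ a := le_max_right _ _
      linarith
    · rw [h] at hyU; exact h1U hyU
    · have : b ≤ γm * c := min_le_right _ _
      linarith
  by_cases hcase : a < 1 ∧ 1 < b
  · exact key (Ioo a 1) isOpen_Ioo (fun y hy => ⟨hy.1, lt_trans hy.2 hcase.2⟩)
      (fun h => lt_irrefl 1 h.2) ((a+1)/2) ⟨by linarith [hcase.1], by linarith [hcase.1]⟩
  · refine key (Ioo a b) isOpen_Ioo (fun y hy => hy) ?_ ((a+b)/2) ⟨by linarith, by linarith⟩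
    intro h; exact hcase ⟨h.1, h.2⟩

lemma tendsto_two_rpow : Tendsto (fun k : ℕ => (2:ℝ) ^ ((1:ℝ)/k)) atTop (𝓝 1) := by
  have h : Tendsto (fun k : ℕ => (1:ℝ)/k) atTop (𝓝 0) := tendsto_one_div_atTop_nhds_zero_nat
  have hcont : ContinuousAt (fun x : ℝ => (2:ℝ) ^ x) 0 :=
    Real.continuousAt_const_rpow two_ne_zero
  have := hcont.tendsto.comp h
  simpa [Function.comp_def] using this

lemma one_mem_TProd_s10 {c γ γp : ℝ} (hγ : γ ≤ 1) (hγp : 1 ≤ γp) :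
    (1:ℝ) ∈ TProd (Tc c) γ γp :=
  mem_TProd_base (mem_Tstar_iff.mpr (Or.inr (Or.inr rfl))) ⟨hγ, hγp⟩

lemma pairstep {c γ : ℝ} (hc : 1 < c) (hγ0 : 0 < γ) (hγc : 1 < γ * c)
    (j₁ j₂ : ℕ) (hj₁ : 1 ≤ j₁) (hj₂ : 1 ≤ j₂) (s : ℝ)
    (hq : (2:ℝ) ^ s ∈ TProd (Tc c) γ (γ * c ^ 2))
    (h1 : (2:ℝ) ^ (s + 1/j₁) ≤ γ * c)
    (h2 : γ ≤ (2:ℝ) ^ (s + 1/j₁ - 1/j₂))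
    (h3 : (2:ℝ) ^ (s + 1/j₁ - 1/j₂) ≤ γ * c ^ 2) :
    (2:ℝ) ^ (s + 1/j₁ - 1/j₂) ∈ TProd (Tc c) γ (γ * c ^ 2) := by
  have hc0 : (0:ℝ) < c := lt_trans one_pos hc
  have ht₁ : c * (2:ℝ) ^ ((1:ℝ)/j₁) ∈ Tc c := ⟨j₁, hj₁, rfl⟩
  have ht₂ : c * (2:ℝ) ^ ((1:ℝ)/j₂) ∈ Tc c := ⟨j₂, hj₂, rfl⟩
  have hstep1val : (2:ℝ) ^ s * (c * (2:ℝ) ^ ((1:ℝ)/j₁)) = c * (2:ℝ) ^ (s + 1/j₁) := by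
    rw [Real.rpow_add two_pos]; ring
  have hmono : (2:ℝ) ^ (s + 1/j₁ - 1/j₂) ≤ (2:ℝ) ^ (s + 1/j₁) := by
    apply Real.rpow_le_rpow_of_exponent_le one_le_two
    have : (0:ℝ) < j₂ := by exact_mod_cast hj₂
    have : (0:ℝ) ≤ 1/(j₂:ℝ) := by positivity
    linarith
  have hstep1 : c * (2:ℝ) ^ (s + 1/j₁) ∈ TProd (Tc c) γ (γ * c ^ 2) := by
    rw [← hstep1val]
    apply mem_TProd_mul hq (mem_Tstar_iff.mpr (Or.inl ht₁))
    rw [hstep1val]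
    constructor
    · calc γ ≤ (2:ℝ) ^ (s + 1/j₁ - 1/j₂) := h2
        _ ≤ (2:ℝ) ^ (s + 1/j₁) := hmono
        _ ≤ c * (2:ℝ) ^ (s + 1/j₁) := by nlinarith [two_rpow_pos (s + 1/(j₁:ℝ))]
    · calc c * (2:ℝ) ^ (s + 1/j₁) ≤ c * (γ * c) := by nlinarith
        _ = γ * c ^ 2 := by ring
  have hstep2val : (c * (2:ℝ) ^ (s + 1/j₁)) * (c * (2:ℝ) ^ ((1:ℝ)/j₂))⁻¹
      = (2:ℝ) ^ (s + 1/j₁ - 1/j₂) := by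
    rw [Real.rpow_sub two_pos, mul_inv]
    have h2j : ((2:ℝ) ^ ((1:ℝ)/j₂)) ≠ 0 := ne_of_gt (two_rpow_pos _)
    field_simp
  rw [← hstep2val]
  apply mem_TProd_mul hstep1
  · exact mem_Tstar_iff.mpr (Or.inr (Or.inl ⟨_, ht₂, rfl⟩))
  · rw [hstep2val]; exact ⟨h2, h3⟩

set_option maxHeartbeats 2000000 in
lemma approx_low {c γ : ℝ} (hc : 1 < c) (hγ0 : 0 < γ) (hγ1 : γ < 1) (hγc : 1 < γ * c)
    {τ ε : ℝ} (hτ1 : γ < τ) (hτ2 : τ < γ * c) (hε : 0 < ε) :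
    ∃ p ∈ TProd (Tc c) γ (γ * c ^ 2), p ≤ τ ∧ τ - p < ε := by
  have hc0 : (0:ℝ) < c := lt_trans one_pos hc
  have hτ0 : 0 < τ := lt_trans hγ0 hτ1
  have hγc0 : 0 < γ * c := by positivity
  have hγc2 : 1 < γ * c ^ 2 := by nlinarith
  -- choose k
  have hθ : (1:ℝ) < min (min (γ*c/τ) (τ/γ)) (min (γ*c) (1 + ε/(γ*c))) := by
    rw [lt_min_iff, lt_min_iff, lt_min_iff]
    refine ⟨⟨?_, ?_⟩, hγc, ?_⟩
    · rw [lt_div_iff₀ hτ0]; linarith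
    · rw [lt_div_iff₀ hγ0]; linarith
    · have : 0 < ε/(γ*c) := by positivity
      linarith
  obtain ⟨k, hk⟩ := ((tendsto_two_rpow.eventually_lt_const hθ).and
    (eventually_ge_atTop 1)).exists
  obtain ⟨h2k, hk1⟩ := hk
  rw [lt_min_iff, lt_min_iff, lt_min_iff] at h2k
  obtain ⟨⟨hcond1, hcond2⟩, hcond3, hcond4⟩ := h2k
  have hk0 : (0:ℝ) < (k:ℝ) := by exact_mod_cast hk1
  obtain ⟨δ, hδ_def⟩ : ∃ δ : ℝ, δ = 1/(k:ℝ) - 1/((k:ℝ)+1) := ⟨_, rfl⟩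
  have hδ0 : 0 < δ := by
    rw [hδ_def, sub_pos]
    apply one_div_lt_one_div_of_lt hk0
    push_cast; linarith
  have hδk : δ ≤ 1/k := by
    rw [hδ_def]
    have : (0:ℝ) ≤ 1/((k:ℝ)+1) := by positivity
    linarith
  have h2δ : (2:ℝ)^δ ≤ (2:ℝ)^((1:ℝ)/k) :=
    Real.rpow_le_rpow_of_exponent_le one_le_two hδk
  have h2δ1 : (1:ℝ) ≤ (2:ℝ)^δ := by
    rw [show (1:ℝ) = (2:ℝ)^(0:ℝ) by simp]
    exact Real.rpow_le_rpow_of_exponent_le one_le_two (le_of_lt hδ0)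
  have hsucc : ((k:ℝ)+1) = ((k+1 : ℕ) : ℝ) := by push_cast; ring
  -- case A : 1 ≤ τ
  have main : ∃ p ∈ TProd (Tc c) γ (γ * c ^ 2), p ≤ τ ∧ τ < p * (2:ℝ)^δ := by
    by_cases h1τ : 1 ≤ τ
    · -- induction lemma A
      have hA : ∀ m : ℕ, (2:ℝ)^((m:ℝ)*δ) ≤ τ → (2:ℝ)^((m:ℝ)*δ) ∈ TProd (Tc c) γ (γ * c ^ 2) := by
        intro m
        induction m with
        | zero =>
          intro _
          simpa using one_mem_TProd_s10 (le_of_lt hγ1) (le_of_lt hγc2)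
        | succ m ih =>
          intro h
          have hmδ : (m:ℝ)*δ ≤ ((m+1:ℕ):ℝ)*δ := by
            push_cast; nlinarith
          have hmono : (2:ℝ)^((m:ℝ)*δ) ≤ (2:ℝ)^(((m+1:ℕ):ℝ)*δ) :=
            Real.rpow_le_rpow_of_exponent_le one_le_two hmδ
          have hq := ih (le_trans hmono h)
          have hexp : ((m+1:ℕ):ℝ)*δ = (m:ℝ)*δ + 1/k - 1/(k+1:ℕ) := by
            push_cast [hδ_def]; ring
          rw [hexp]
          apply pairstep hc hγ0 hγc k (k+1) hk1 (by omega)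
          · exact hq
          · -- 2^(mδ + 1/k) ≤ γc
            have he : (m:ℝ)*δ + 1/k = ((m+1:ℕ):ℝ)*δ + 1/((k+1:ℕ):ℝ) := by
              push_cast [hδ_def]; ring
            rw [he, Real.rpow_add two_pos]
            have hle1 : (2:ℝ)^(((m+1:ℕ):ℝ)*δ) ≤ τ := by exact_mod_cast h
            have hle2 : (2:ℝ)^((1:ℝ)/((k+1:ℕ):ℝ)) ≤ (2:ℝ)^((1:ℝ)/k) := by
              apply Real.rpow_le_rpow_of_exponent_le one_le_two
              rw [div_le_div_iff₀ (by push_cast; linarith) hk0]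
              push_cast; linarith
            calc (2:ℝ)^(((m+1:ℕ):ℝ)*δ) * (2:ℝ)^((1:ℝ)/((k+1:ℕ):ℝ))
                ≤ τ * (2:ℝ)^((1:ℝ)/k) := by
                  apply mul_le_mul hle1 hle2 (le_of_lt (two_rpow_pos _)) (le_of_lt hτ0)
              _ ≤ τ * (γ*c/τ) := by nlinarith [two_rpow_pos ((1:ℝ)/(k:ℝ))]
              _ = γ * c := by field_simp
          · rw [← hexp]
            calc γ ≤ 1 := le_of_lt hγ1
              _ ≤ (2:ℝ)^(((m+1:ℕ):ℝ)*δ) := by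
                rw [show (1:ℝ) = (2:ℝ)^(0:ℝ) by simp]
                apply Real.rpow_le_rpow_of_exponent_le one_le_two
                positivity
          · rw [← hexp]
            calc (2:ℝ)^(((m+1:ℕ):ℝ)*δ) ≤ τ := h
              _ ≤ γ * c ^ 2 := by nlinarith
      -- choose m
      have hlogb0 : 0 ≤ Real.logb 2 τ := Real.logb_nonneg one_lt_two h1τ
      obtain ⟨m, hm_def⟩ : ∃ m : ℕ, m = ⌊Real.logb 2 τ / δ⌋₊ := ⟨_, rfl⟩
      have hm1 : (m:ℝ)*δ ≤ Real.logb 2 τ := by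
        have := Nat.floor_le (show 0 ≤ Real.logb 2 τ / δ by positivity)
        rw [← hm_def] at this

        calc (m:ℝ)*δ ≤ (Real.logb 2 τ / δ) * δ := mul_le_mul_of_nonneg_right this (le_of_lt hδ0)
          _ = Real.logb 2 τ := by field_simp
      have hm2 : Real.logb 2 τ < ((m:ℝ)+1)*δ := by
        have := Nat.lt_floor_add_one (Real.logb 2 τ / δ)
        rw [← hm_def] at this
        calc Real.logb 2 τ = (Real.logb 2 τ / δ) * δ := by field_simp
          _ < ((m:ℝ)+1)*δ := mul_lt_mul_of_pos_right this hδ0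
      refine ⟨(2:ℝ)^((m:ℝ)*δ), ?_, ?_, ?_⟩
      · apply hA
        calc (2:ℝ)^((m:ℝ)*δ) ≤ (2:ℝ)^(Real.logb 2 τ) :=
            Real.rpow_le_rpow_of_exponent_le one_le_two hm1
          _ = τ := Real.rpow_logb two_pos (by norm_num) hτ0
      · calc (2:ℝ)^((m:ℝ)*δ) ≤ (2:ℝ)^(Real.logb 2 τ) :=
            Real.rpow_le_rpow_of_exponent_le one_le_two hm1
          _ = τ := Real.rpow_logb two_pos (by norm_num) hτ0
      · calc τ = (2:ℝ)^(Real.logb 2 τ) := (Real.rpow_logb two_pos (by norm_num) hτ0).symm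
          _ < (2:ℝ)^(((m:ℝ)+1)*δ) := Real.rpow_lt_rpow_of_exponent_lt one_lt_two hm2
          _ = (2:ℝ)^((m:ℝ)*δ) * (2:ℝ)^δ := by
            rw [← Real.rpow_add two_pos]; ring_nf
    · -- case B : τ < 1
      push_neg at h1τ
      have hB : ∀ m : ℕ, γ ≤ (2:ℝ)^(-((m:ℝ)*δ)) →
          (2:ℝ)^(-((m:ℝ)*δ)) ∈ TProd (Tc c) γ (γ * c ^ 2) := by
        intro m
        induction m with
        | zero =>
          intro _
          simpa using one_mem_TProd_s10 (le_of_lt hγ1) (le_of_lt hγc2)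
        | succ m ih =>
          intro h
          have hmδ : -(((m+1:ℕ):ℝ)*δ) ≤ -((m:ℝ)*δ) := by
            push_cast; nlinarith
          have hmono : (2:ℝ)^(-(((m+1:ℕ):ℝ)*δ)) ≤ (2:ℝ)^(-((m:ℝ)*δ)) :=
            Real.rpow_le_rpow_of_exponent_le one_le_two hmδ
          have hq := ih (le_trans h hmono)
          have hexp : -(((m+1:ℕ):ℝ)*δ) = -((m:ℝ)*δ) + 1/((k+1:ℕ):ℝ) - 1/k := by
            push_cast [hδ_def]; ring
          rw [hexp]
          apply pairstep hc hγ0 hγc (k+1) k (by omega) hk1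
          · exact hq
          · -- 2^(-(mδ) + 1/(k+1)) ≤ γc
            have hle : -((m:ℝ)*δ) + 1/((k+1:ℕ):ℝ) ≤ (1:ℝ)/k := by
              have h1 : (0:ℝ) ≤ (m:ℝ)*δ := by positivity
              have h2 : (1:ℝ)/((k+1:ℕ):ℝ) ≤ 1/k := by
                rw [div_le_div_iff₀ (by push_cast; linarith) hk0]
                push_cast; linarith
              linarith
            calc (2:ℝ)^(-((m:ℝ)*δ) + 1/((k+1:ℕ):ℝ))
                ≤ (2:ℝ)^((1:ℝ)/k) := Real.rpow_le_rpow_of_exponent_le one_le_two hle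
              _ ≤ γ * c := le_of_lt hcond3
          · rw [← hexp]; exact h
          · rw [← hexp]
            have hstep : (2:ℝ)^(-(((m+1:ℕ):ℝ)*δ)) ≤ (2:ℝ)^(0:ℝ) := by
              apply Real.rpow_le_rpow_of_exponent_le one_le_two
              push_cast
              nlinarith
            calc (2:ℝ)^(-(((m+1:ℕ):ℝ)*δ)) ≤ (2:ℝ)^(0:ℝ) := hstep
              _ = 1 := by simp
              _ ≤ γ * c ^ 2 := le_of_lt hγc2
      -- choose m
      have hlogb0 : 0 < -Real.logb 2 τ := by
        have := Real.logb_neg one_lt_two hτ0 h1τ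
        linarith
      obtain ⟨m, hm_def⟩ : ∃ m : ℕ, m = ⌈(-Real.logb 2 τ) / δ⌉₊ := ⟨_, rfl⟩
      have hm1 : -Real.logb 2 τ ≤ (m:ℝ)*δ := by
        have := Nat.le_ceil ((-Real.logb 2 τ) / δ)
        rw [← hm_def] at this
        calc -Real.logb 2 τ = ((-Real.logb 2 τ)/δ) * δ := by field_simp
          _ ≤ (m:ℝ)*δ := mul_le_mul_of_nonneg_right this (le_of_lt hδ0)
      have hm2 : (m:ℝ)*δ < -Real.logb 2 τ + δ := by
        have := Nat.ceil_lt_add_one (show 0 ≤ (-Real.logb 2 τ) / δ by positivity)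
        rw [← hm_def] at this
        calc (m:ℝ)*δ < ((-Real.logb 2 τ)/δ + 1) * δ := mul_lt_mul_of_pos_right this hδ0
          _ = -Real.logb 2 τ + δ := by field_simp
      have hple : (2:ℝ)^(-((m:ℝ)*δ)) ≤ τ := by
        have hstep : (2:ℝ)^(-((m:ℝ)*δ)) ≤ (2:ℝ)^(Real.logb 2 τ) := by
          apply Real.rpow_le_rpow_of_exponent_le one_le_two
          linarith
        calc (2:ℝ)^(-((m:ℝ)*δ)) ≤ (2:ℝ)^(Real.logb 2 τ) := hstep
          _ = τ := Real.rpow_logb two_pos (by norm_num) hτ0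
      have hplow : τ < (2:ℝ)^(-((m:ℝ)*δ)) * (2:ℝ)^δ := by
        calc τ = (2:ℝ)^(Real.logb 2 τ) := (Real.rpow_logb two_pos (by norm_num) hτ0).symm
          _ < (2:ℝ)^(-((m:ℝ)*δ) + δ) := by
            apply Real.rpow_lt_rpow_of_exponent_lt one_lt_two
            linarith
          _ = (2:ℝ)^(-((m:ℝ)*δ)) * (2:ℝ)^δ := by rw [← Real.rpow_add two_pos]
      refine ⟨(2:ℝ)^(-((m:ℝ)*δ)), ?_, hple, hplow⟩
      apply hB
      -- γ ≤ 2^(-(mδ)) : from τ < γ ... τ·2^{-δ} ... use hplow and hcond2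
      have h2δτγ : γ * (2:ℝ)^δ < τ := by
        calc γ * (2:ℝ)^δ ≤ γ * (2:ℝ)^((1:ℝ)/k) := by nlinarith
          _ < γ * (τ/γ) := by nlinarith
          _ = τ := by field_simp
      nlinarith [two_rpow_pos (-((m:ℝ)*δ)), two_rpow_pos δ]
  -- finish : error bound
  obtain ⟨p, hpS, hpτ, hpδ⟩ := main
  refine ⟨p, hpS, hpτ, ?_⟩
  have hp0 : 0 < p := lt_of_lt_of_le hγ0 (TProd_subset_Icc hpS).1
  have h2d4 : (2:ℝ)^δ < 1 + ε/(γ*c) := lt_of_le_of_lt h2δ hcond4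
  have hkey : p * (2:ℝ)^δ < p * (1 + ε/(γ*c)) := by nlinarith
  have hpee : p * (ε/(γ*c)) < ε := by
    rw [show p * (ε/(γ*c)) = p * ε / (γ*c) by ring, div_lt_iff₀ hγc0]
    nlinarith
  nlinarith

lemma dense_Tc {c : ℝ} (hc : 1 < c) :
    DenseInIcc (Tc c) ((1+c⁻¹)/2) ((1+c⁻¹)/2 * c^2) := by
  have hc0 : (0:ℝ) < c := lt_trans one_pos hc
  set γ : ℝ := (1+c⁻¹)/2 with hγ_def
  have hγ0 : 0 < γ := by rw [hγ_def]; positivity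
  have hγ1 : γ < 1 := by
    rw [hγ_def]
    have : c⁻¹ < 1 := inv_lt_one_of_one_lt₀ hc
    linarith
  have hγc : 1 < γ * c := by
    have h : γ * c = (c+1)/2 := by
      rw [hγ_def]; field_simp
    rw [h]; linarith
  have hγc2 : 1 < γ * c ^ 2 := by nlinarith
  have hγcc : γ * c < γ * c ^ 2 := by nlinarith
  -- D1
  have D1 : Ioo γ (γ*c) ⊆ closure (TProd (Tc c) γ (γ * c^2)) := by
    intro y hy
    rw [Metric.mem_closure_iff]
    intro ε hε
    obtain ⟨p, hpS, hpy, hperr⟩ := approx_low hc hγ0 hγ1 hγc hy.1 hy.2 hε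
    exact ⟨p, hpS, by rw [Real.dist_eq, abs_of_nonneg (by linarith)]; linarith⟩
  -- D2
  have D2 : ∀ x ∈ Ioc (γ*c) (γ*c^2), x ∈ closure (TProd (Tc c) γ (γ * c^2)) := by
    intro x hx
    have hx0 : 0 < x := lt_trans (lt_trans one_pos hγc) hx.1
    rw [Metric.mem_closure_iff]
    intro ε hε
    have hθ : (1:ℝ) < x/(γ*c) := by
      rw [lt_div_iff₀ (by positivity)]; linarith [hx.1]
    obtain ⟨j, h2j, hj1⟩ := ((tendsto_two_rpow.eventually_lt_const hθ).and
      (eventually_ge_atTop 1)).exists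
    have htj : c * (2:ℝ)^((1:ℝ)/j) ∈ Tc c := ⟨j, hj1, rfl⟩
    obtain ⟨htj1, htj2⟩ := Tc_bounds hc htj
    have htj0 : 0 < c * (2:ℝ)^((1:ℝ)/j) := lt_trans hc0 htj1
    have hτγ : γ < x / (c * (2:ℝ)^((1:ℝ)/j)) := by
      rw [lt_div_iff₀ htj0]
      have h1 : γ * (c * (2:ℝ)^((1:ℝ)/j)) = (γ*c) * (2:ℝ)^((1:ℝ)/j) := by ring
      rw [h1]
      have h2 : (γ*c) * (2:ℝ)^((1:ℝ)/j) < (γ*c) * (x/(γ*c)) :=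
        mul_lt_mul_of_pos_left h2j (by positivity)
      calc (γ*c) * (2:ℝ)^((1:ℝ)/j) < (γ*c) * (x/(γ*c)) := h2
        _ = x := by field_simp
    have hτγc : x / (c * (2:ℝ)^((1:ℝ)/j)) < γ * c := by
      rw [div_lt_iff₀ htj0]
      calc x ≤ γ * c^2 := hx.2
        _ = (γ * c) * c := by ring
        _ < γ * c * (c * (2:ℝ)^((1:ℝ)/j)) := by
          apply mul_lt_mul_of_pos_left htj1 (by positivity)
    obtain ⟨p, hpS, hpτ, hperr⟩ := approx_low hc hγ0 hγ1 hγc hτγ hτγc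
      (show (0:ℝ) < ε/(2*c) by positivity)
    have hp_ge : γ ≤ p := (TProd_subset_Icc hpS).1
    have hy_mem : p * (c * (2:ℝ)^((1:ℝ)/j)) ∈ TProd (Tc c) γ (γ * c^2) := by
      apply mem_TProd_mul hpS (mem_Tstar_iff.mpr (Or.inl htj))
      constructor
      · nlinarith
      · calc p * (c * (2:ℝ)^((1:ℝ)/j)) ≤ (x / (c * (2:ℝ)^((1:ℝ)/j))) * (c * (2:ℝ)^((1:ℝ)/j)) :=
            mul_le_mul_of_nonneg_right hpτ (le_of_lt htj0)
          _ = x := by field_simp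
          _ ≤ γ * c^2 := hx.2
    refine ⟨p * (c * (2:ℝ)^((1:ℝ)/j)), hy_mem, ?_⟩
    have hxval : x = (x / (c * (2:ℝ)^((1:ℝ)/j))) * (c * (2:ℝ)^((1:ℝ)/j)) := by field_simp
    rw [Real.dist_eq]
    have hdiff : x - p * (c * (2:ℝ)^((1:ℝ)/j))
        = (x / (c * (2:ℝ)^((1:ℝ)/j)) - p) * (c * (2:ℝ)^((1:ℝ)/j)) := by
      rw [sub_mul, ← hxval]
    have hnn : 0 ≤ x - p * (c * (2:ℝ)^((1:ℝ)/j)) := by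
      rw [hdiff]
      apply mul_nonneg (by linarith) (le_of_lt htj0)
    rw [abs_of_nonneg hnn, hdiff]
    calc (x / (c * (2:ℝ)^((1:ℝ)/j)) - p) * (c * (2:ℝ)^((1:ℝ)/j))
        ≤ (x / (c * (2:ℝ)^((1:ℝ)/j)) - p) * (2*c) := by
          apply mul_le_mul_of_nonneg_left htj2 (by linarith)
      _ < (ε/(2*c)) * (2*c) := by
          apply mul_lt_mul_of_pos_right hperr (by positivity)
      _ = ε := by field_simp
  -- assemble
  show Icc γ (γ * c^2) ⊆ closure (TProd (Tc c) γ (γ * c^2))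
  intro x hx
  by_cases hx2 : x ≤ γ * c
  · have h1 : x ∈ Icc γ (γ*c) := ⟨hx.1, hx2⟩
    have h2 : Icc γ (γ*c) = closure (Ioo γ (γ*c)) := (closure_Ioo (by nlinarith)).symm
    rw [h2] at h1
    exact closure_minimal D1 isClosed_closure h1
  · push_neg at hx2
    exact D2 x ⟨hx2, hx.2⟩


theorem stmt10 (c : ℝ) (hc : 1 < c)
    (T : Set ℝ) (hT : T = {x : ℝ | ∃ k : ℕ, 1 ≤ k ∧ x = c * (2:ℝ) ^ ((1:ℝ)/k)}) :
    limitRatio T = ENNReal.ofReal (c ^ 2) ∧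
    ∀ γp ∈ Ioo c (c ^ 2),
      Ioo (γp / c) c ∩ TProd T 1 γp = ∅ ∧ ¬ DenseInIcc T 1 γp := by
  have hTc : T = Tc c := hT
  subst hTc
  have hc0 : (0:ℝ) < c := lt_trans one_pos hc
  constructor
  · apply le_antisymm
    · apply sInf_le
      have hγ0 : (0:ℝ) < (1+c⁻¹)/2 := by positivity
      have hγ1 : (1+c⁻¹)/2 < 1 := by
        have : c⁻¹ < 1 := inv_lt_one_of_one_lt₀ hc
        linarith
      have hinv : c⁻¹ * c = 1 := inv_mul_cancel₀ (ne_of_gt hc0)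
      have hγc2 : 1 < (1+c⁻¹)/2 * c^2 := by nlinarith
      refine ⟨(1+c⁻¹)/2, (1+c⁻¹)/2*c^2, ⟨hγ0, hγ1⟩, hγc2, dense_Tc hc, ?_⟩
      congr 1
      field_simp
    · apply le_sInf
      rintro r ⟨γm, γp, ⟨hm0, hm1⟩, hp1, hd, rfl⟩
      apply ENNReal.ofReal_le_ofReal
      by_contra hcon
      push_neg at hcon
      have hlt : γp < γm * c^2 := by
        rw [div_lt_iff₀ hm0] at hcon; linarith
      exact not_dense_of_ratio_lt hc hm0 (le_of_lt hm1) (le_of_lt hp1)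
        (lt_trans hm1 hp1) hlt hd
  · intro γp hγp
    obtain ⟨hγp1, hγp2⟩ := hγp
    have h1γp : (1:ℝ) ≤ γp := by linarith
    constructor
    · rw [Set.eq_empty_iff_forall_notMem]
      rintro x ⟨hxI, hxT⟩
      obtain ⟨hx1, hx2⟩ := hxI
      rcases gap_invariant hc one_pos le_rfl h1γp x hxT with h | h | h
      · linarith
      · have h1 : (1:ℝ) < γp / c := by rw [lt_div_iff₀ hc0]; linarith
        rw [h] at hx1
        linarith
      · rw [one_mul] at h; linarith
    · exact not_dense_of_ratio_lt hc one_pos le_rfl h1γp (by linarith)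
        (by rw [one_mul]; exact hγp2)
end
end
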